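/- arXiv:2203.02854 — 4 statements merged into one kernel-verified Lean document; each statement's English description precedes it below -/
import Mathlib

section
/- H_+^AC([0,1]) is not topologically 1-generated: for every f ∈ H_+^AC([0,1]), the cyclic subgroup generated by f is not dense in H_+^AC([0,1]) with respect to the metric ρ. -/
open MeasureTheory Set

/-- `f : ℝ → ℝ` is absolutely continuous on the interval `[a,b]`. -/
def ACOn (f : ℝ → ℝ) (a b : ℝ) : Prop :=
  ∀ ε > (0:ℝ), ∃ δ > (0:ℝ), ∀ n : ℕ, ∀ u v : Fin n → ℝ,
    (∀ i, a ≤ u i ∧ u i ≤ v i ∧ v i ≤ b) →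
    (∀ i j, i ≠ j → Disjoint (Ioo (u i) (v i)) (Ioo (u j) (v j))) →
    (∑ i, (v i - u i)) ≤ δ →
    (∑ i, |f (v i) - f (u i)|) ≤ ε

/-- The group `H₊([a,b])` of increasing self-homeomorphisms of `[a,b]`, encoded as the
set of permutations of `ℝ` which fix the complement of `[a,b]` pointwise, are strictly
increasing on `[a,b]`, and map `[a,b]` into (hence onto) itself continuously. -/
def Hplus (a b : ℝ) : Set (Equiv.Perm ℝ) :=
  {f | (∀ x, x ∉ Icc a b → f x = x) ∧ StrictMonoOn f (Icc a b) ∧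
       MapsTo f (Icc a b) (Icc a b) ∧ ContinuousOn f (Icc a b)}

/-- The group `H₊^AC([a,b])`: those `f ∈ H₊([a,b])` with both `f` and `f⁻¹`
absolutely continuous on `[a,b]`. -/
def Hac (a b : ℝ) : Set (Equiv.Perm ℝ) :=
  {f | f ∈ Hplus a b ∧ ACOn f a b ∧ ACOn f.symm a b}

/-- The metric `ρ(f,g) = ∫_a^b |f' - g'| dλ` on `H₊^AC([a,b])`. -/
noncomputable def rho (a b : ℝ) (f g : Equiv.Perm ℝ) : ℝ :=
  ∫ x in Ioo a b, |deriv (⇑f) x - deriv (⇑g) x|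

/-- The topology on `H₊^AC([a,b])` induced by the metric `ρ`. -/
noncomputable def rhoTop (a b : ℝ) : TopologicalSpace ↥(Hac a b) :=
  TopologicalSpace.generateFrom
    {U | ∃ f : ↥(Hac a b), ∃ ε : ℝ, 0 < ε ∧
      U = {g : ↥(Hac a b) | rho a b (f : Equiv.Perm ℝ) (g : Equiv.Perm ℝ) < ε}}

/-- The fixed-point set of `f`, within `[0,1]`. -/
def fixSet (f : Equiv.Perm ℝ) : Set ℝ := {x | x ∈ Icc (0:ℝ) 1 ∧ f x = x}

noncomputable instance : TopologicalSpace ↥(Hac 0 1) := rhoTop 0 1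


/-- Monotone + continuous: integral of deriv over `Ioo u v` is at most the increment. -/
lemma mono_integral {G : ℝ → ℝ} (hG : Monotone G) (hc : Continuous G) {u v : ℝ} (huv : u ≤ v) :
    IntegrableOn (deriv G) (Ioo u v) volume ∧
      ∫ x in Ioo u v, deriv G x ≤ G v - G u := by
  set μ := hG.stieltjesFunction.measure with hμ
  have hSG : ∀ x, hG.stieltjesFunction x = G x := by
    intro x
    rw [hG.stieltjesFunction_eq]
    exact rightLim_eq_of_tendsto
      ((hc.tendsto x).mono_left nhdsWithin_le_nhds)
  have hIoc : μ (Ioc u v) = ENNReal.ofReal (G v - G u) := by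
    rw [hμ, StieltjesFunction.measure_Ioc, hSG, hSG]
  have hne : μ (Ioo u v) ≠ ⊤ := by
    refine ne_top_of_le_ne_top ?_ (measure_mono Ioo_subset_Ioc_self)
    rw [hIoc]; exact ENNReal.ofReal_ne_top
  have hae : deriv G =ᵐ[volume] fun x => (μ.rnDeriv volume x).toReal := by
    filter_upwards [hG.ae_hasDerivAt] with x hx
    exact hx.deriv
  have hint : IntegrableOn (fun x => (μ.rnDeriv volume x).toReal) (Ioo u v) volume :=
    Measure.integrableOn_toReal_rnDeriv hne
  constructor
  · exact hint.congr_fun_ae (ae_restrict_of_ae hae.symm)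
  · calc ∫ x in Ioo u v, deriv G x
        = ∫ x in Ioo u v, (μ.rnDeriv volume x).toReal := by
          exact integral_congr_ae (ae_restrict_of_ae hae)
      _ ≤ (μ (Ioo u v)).toReal := Measure.setIntegral_toReal_rnDeriv_le hne
      _ ≤ (μ (Ioc u v)).toReal := by
          apply ENNReal.toReal_mono (by rw [hIoc]; exact ENNReal.ofReal_ne_top)
          exact measure_mono Ioo_subset_Ioc_self
      _ = G v - G u := by rw [hIoc]; exact ENNReal.toReal_ofReal (sub_nonneg.2 (hG huv))

lemma rho_lower {H G : ℝ → ℝ} (hH : Monotone H) (hcH : Continuous H)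
    (hG : Monotone G) (hcG : Continuous G) {u v : ℝ}
    (h0u : (0:ℝ) ≤ u) (huv : u ≤ v) (hv1 : v ≤ 1) :
    (∫ x in Ioo u v, deriv H x) - (G v - G u) ≤
      ∫ x in Ioo (0:ℝ) 1, |deriv H x - deriv G x| := by
  have h01 : (0:ℝ) ≤ 1 := zero_le_one
  have iH01 := (mono_integral hH hcH h01).1
  have iG01 := (mono_integral hG hcG h01).1
  have iHuv := (mono_integral hH hcH huv).1
  have iGuv := (mono_integral hG hcG huv).1
  have iAbs : IntegrableOn (fun x => |deriv H x - deriv G x|) (Ioo (0:ℝ) 1) volume :=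
    (iH01.sub iG01).abs
  have hGle := (mono_integral hG hcG huv).2
  calc (∫ x in Ioo u v, deriv H x) - (G v - G u)
      ≤ (∫ x in Ioo u v, deriv H x) - ∫ x in Ioo u v, deriv G x := by linarith
    _ = ∫ x in Ioo u v, (deriv H x - deriv G x) := (integral_sub iHuv iGuv).symm
    _ ≤ ∫ x in Ioo u v, |deriv H x - deriv G x| :=
        integral_mono (iHuv.sub iGuv) (iHuv.sub iGuv).abs (fun x => le_abs_self _)
    _ ≤ ∫ x in Ioo (0:ℝ) 1, |deriv H x - deriv G x| := by
        apply setIntegral_mono_set iAbs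
        · exact Filter.Eventually.of_forall fun x => abs_nonneg _
        · exact HasSubset.Subset.eventuallyLE (Ioo_subset_Ioo h0u hv1)

lemma strictMono_glue {ψ : ℝ → ℝ} (h1 : ∀ x, x ∉ Icc (0:ℝ) 1 → ψ x = x)
    (h2 : StrictMonoOn ψ (Icc 0 1)) (h3 : MapsTo ψ (Icc 0 1) (Icc 0 1)) :
    StrictMono ψ := by
  intro x y hxy
  by_cases hx : x ∈ Icc (0:ℝ) 1 <;> by_cases hy : y ∈ Icc (0:ℝ) 1
  · exact h2 hx hy hxy
  · have hy1 : 1 < y := by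
      rcases lt_or_ge y 0 with h | h
      · exact absurd (le_trans hx.1 hxy.le) (not_le.2 h)
      · by_contra h'
        exact hy ⟨h, not_lt.1 h'⟩
    rw [h1 y hy]
    exact lt_of_le_of_lt (h3 hx).2 hy1
  · have hx0 : x < 0 := by
      rcases lt_or_ge x 0 with h | h
      · exact h
      · exact absurd ⟨h, le_trans hxy.le hy.2⟩ hx
    rw [h1 x hx]
    exact lt_of_lt_of_le hx0 (h3 hy).1
  · rw [h1 x hx, h1 y hy]; exact hxy

lemma lip_ACOn {F : ℝ → ℝ} {C : ℝ} (hC : 0 < C)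
    (hL : ∀ u v : ℝ, u ∈ Icc (0:ℝ) 1 → v ∈ Icc (0:ℝ) 1 → u ≤ v → |F v - F u| ≤ C * (v - u)) :
    ACOn F 0 1 := by
  intro ε hε
  refine ⟨ε / C, by positivity, fun n u v huv _ hsum => ?_⟩
  calc ∑ i, |F (v i) - F (u i)| ≤ ∑ i, C * (v i - u i) := by
        refine Finset.sum_le_sum fun i _ => ?_
        obtain ⟨h1, h2, h3⟩ := huv i
        exact hL _ _ ⟨h1, h2.trans h3⟩ ⟨h1.trans h2, h3⟩ h2
    _ = C * ∑ i, (v i - u i) := by rw [Finset.mul_sum]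
    _ ≤ C * (ε / C) := mul_le_mul_of_nonneg_left hsum hC.le
    _ = ε := by field_simp

lemma phi_pkg {a b : ℝ} (ha0 : 0 < a) (hab : a < b) (hb1 : b ≤ 1) :
    ∃ h : Equiv.Perm ℝ, h ∈ Hac 0 1 ∧ Monotone ⇑h ∧ Continuous ⇑h ∧
      (∫ x in Ioo (0:ℝ) a, deriv (⇑h) x) = (a+b)/2 ∧
      (∫ x in Ioo a (1:ℝ), deriv (⇑h) x) = 1 - (a+b)/2 := by
  set t : ℝ := (a+b)/2 with htdef
  have ha1 : a < 1 := hab.trans_le hb1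
  have hat : a < t := by rw [htdef]; linarith
  have ht1 : t < 1 := by rw [htdef]; linarith
  have ht0 : 0 < t := ha0.trans hat
  set s1 : ℝ := t / a with hs1def
  set m2 : ℝ := (1 - t) / (1 - a) with hm2def
  have hs1 : 0 < s1 := div_pos ht0 ha0
  have hm2 : 0 < m2 := div_pos (by linarith) (by linarith)
  have hs1a : s1 * a = t := div_mul_cancel₀ t ha0.ne'
  have hm2a : m2 * (1 - a) = 1 - t := div_mul_cancel₀ _ (by linarith : (1:ℝ) - a ≠ 0)
  set φ : ℝ → ℝ := fun x => if x ∈ Icc (0:ℝ) 1 then (if x ≤ a then s1 * x else t + m2 * (x - a)) else x with hφdef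
  -- bi-Lipschitz bounds on [0,1]
  have key : ∀ u v : ℝ, u ∈ Icc (0:ℝ) 1 → v ∈ Icc (0:ℝ) 1 → u ≤ v →
      min s1 m2 * (v - u) ≤ φ v - φ u ∧ φ v - φ u ≤ max s1 m2 * (v - u) := by
    intro u v hu hv huv
    have hvu : 0 ≤ v - u := by linarith
    simp only [hφdef, if_pos hu, if_pos hv]
    by_cases h2 : v ≤ a
    · have h1 : u ≤ a := huv.trans h2
      rw [if_pos h1, if_pos h2]
      constructor
      · calc min s1 m2 * (v - u) ≤ s1 * (v - u) :=
              mul_le_mul_of_nonneg_right (min_le_left _ _) hvu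
          _ = s1 * v - s1 * u := by ring
      · calc s1 * v - s1 * u = s1 * (v - u) := by ring
          _ ≤ max s1 m2 * (v - u) := mul_le_mul_of_nonneg_right (le_max_left _ _) hvu
    · rw [if_neg h2]
      have hva : 0 ≤ v - a := by linarith [not_le.1 h2]
      by_cases h1 : u ≤ a
      · rw [if_pos h1]
        have hau : 0 ≤ a - u := by linarith
        have e1 : t + m2 * (v - a) - s1 * u = m2 * (v - a) + s1 * (a - u) := by
          rw [← hs1a]; ring
        rw [e1]
        constructor
        · have b1 : min s1 m2 * (v - a) ≤ m2 * (v - a) :=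
            mul_le_mul_of_nonneg_right (min_le_right _ _) hva
          have b2 : min s1 m2 * (a - u) ≤ s1 * (a - u) :=
            mul_le_mul_of_nonneg_right (min_le_left _ _) hau
          nlinarith [b1, b2]
        · have b1 : m2 * (v - a) ≤ max s1 m2 * (v - a) :=
            mul_le_mul_of_nonneg_right (le_max_right _ _) hva
          have b2 : s1 * (a - u) ≤ max s1 m2 * (a - u) :=
            mul_le_mul_of_nonneg_right (le_max_left _ _) hau
          nlinarith [b1, b2]
      · rw [if_neg h1]
        constructor
        · calc min s1 m2 * (v - u) ≤ m2 * (v - u) :=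
              mul_le_mul_of_nonneg_right (min_le_right _ _) hvu
            _ = (t + m2 * (v - a)) - (t + m2 * (u - a)) := by ring
        · calc (t + m2 * (v - a)) - (t + m2 * (u - a)) = m2 * (v - u) := by ring
            _ ≤ max s1 m2 * (v - u) := mul_le_mul_of_nonneg_right (le_max_right _ _) hvu
  have hcmin : 0 < min s1 m2 := lt_min hs1 hm2
  have hsmOn : StrictMonoOn φ (Icc (0:ℝ) 1) := by
    intro u hu v hv huv
    have := (key u v hu hv huv.le).1
    nlinarith [this, mul_pos hcmin (by linarith : (0:ℝ) < v - u)]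
  have hφ0 : φ 0 = 0 := by
    simp only [hφdef, if_pos (by constructor <;> norm_num : (0:ℝ) ∈ Icc (0:ℝ) 1),
      if_pos ha0.le, mul_zero]
  have hφ1 : φ 1 = 1 := by
    simp only [hφdef, if_pos (by constructor <;> norm_num : (1:ℝ) ∈ Icc (0:ℝ) 1),
      if_neg (not_le.2 ha1)]
    linarith [hm2a]
  have hmapsφ : MapsTo φ (Icc (0:ℝ) 1) (Icc (0:ℝ) 1) := by
    intro x hx
    have h0m : (0:ℝ) ∈ Icc (0:ℝ) 1 := by constructor <;> norm_num
    have h1m : (1:ℝ) ∈ Icc (0:ℝ) 1 := by constructor <;> norm_num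
    constructor
    · rw [← hφ0]; exact hsmOn.monotoneOn h0m hx hx.1
    · rw [← hφ1]; exact hsmOn.monotoneOn hx h1m hx.2
  have hfixφ : ∀ x, x ∉ Icc (0:ℝ) 1 → φ x = x := fun x hx => by
    simp only [hφdef, if_neg hx]
  have hφsm : StrictMono φ := strictMono_glue hfixφ hsmOn hmapsφ
  have hsurj : Function.Surjective φ := by
    intro y
    by_cases hy : y ∈ Icc (0:ℝ) 1
    · by_cases hyt : y ≤ t
      · refine ⟨a / t * y, ?_⟩
        have hx0 : 0 ≤ a / t * y := mul_nonneg (div_nonneg ha0.le ht0.le) hy.1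
        have hxa : a / t * y ≤ a := by
          calc a / t * y ≤ a / t * t := mul_le_mul_of_nonneg_left hyt (by positivity)
            _ = a := div_mul_cancel₀ a ht0.ne'
        have hmem : a / t * y ∈ Icc (0:ℝ) 1 := ⟨hx0, hxa.trans ha1.le⟩
        simp only [hφdef, if_pos hmem, if_pos hxa, hs1def]
        field_simp
      · have hyt' : t < y := not_le.1 hyt
        have h1t : (0:ℝ) < 1 - t := by linarith
        have h1a : (0:ℝ) < 1 - a := by linarith
        refine ⟨a + (1-a)/(1-t) * (y - t), ?_⟩
        have hpos : 0 < (1-a)/(1-t) := div_pos h1a h1t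
        have hgta : a < a + (1-a)/(1-t) * (y - t) := by nlinarith
        have hle1 : a + (1-a)/(1-t) * (y - t) ≤ 1 := by
          have h' : (1-a)/(1-t) * (y - t) ≤ (1-a)/(1-t) * (1 - t) :=
            mul_le_mul_of_nonneg_left (by linarith [hy.2]) hpos.le
          rw [div_mul_cancel₀ _ h1t.ne'] at h'
          linarith
        have hmem : a + (1-a)/(1-t) * (y - t) ∈ Icc (0:ℝ) 1 := ⟨by linarith, hle1⟩
        simp only [hφdef, if_pos hmem, if_neg (not_le.2 hgta), hm2def]
        field_simp
        ring
    · exact ⟨y, by simp only [hφdef, if_neg hy]⟩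
  -- the permutation
  -- derivative computations
  have hda : ∀ x ∈ Ioo (0:ℝ) a, deriv φ x = s1 := by
    intro x hx
    have hev : φ =ᶠ[nhds x] fun y => s1 * y := by
      filter_upwards [Ioo_mem_nhds hx.1 hx.2] with y hy
      have hyI : y ∈ Icc (0:ℝ) 1 := ⟨hy.1.le, (hy.2.trans ha1).le⟩
      simp only [hφdef, if_pos hyI, if_pos hy.2.le]
    rw [hev.deriv_eq]
    simpa using ((hasDerivAt_id x).const_mul s1).deriv
  have hdb : ∀ x ∈ Ioo a (1:ℝ), deriv φ x = m2 := by
    intro x hx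
    have hev : φ =ᶠ[nhds x] fun y => t + m2 * (y - a) := by
      filter_upwards [Ioo_mem_nhds hx.1 hx.2] with y hy
      have hyI : y ∈ Icc (0:ℝ) 1 := ⟨(ha0.trans hy.1).le, hy.2.le⟩
      simp only [hφdef, if_pos hyI, if_neg (not_le.2 hy.1)]
    rw [hev.deriv_eq]
    simpa using ((((hasDerivAt_id x).sub_const a).const_mul m2).const_add t).deriv
  have hIa : ∫ x in Ioo (0:ℝ) a, deriv φ x = t := by
    rw [setIntegral_congr_fun measurableSet_Ioo (fun x hx => hda x hx), setIntegral_const,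
      measureReal_def, Real.volume_Ioo, sub_zero, ENNReal.toReal_ofReal ha0.le, smul_eq_mul, hs1def]
    field_simp
  have hIb : ∫ x in Ioo a (1:ℝ), deriv φ x = 1 - t := by
    rw [setIntegral_congr_fun measurableSet_Ioo (fun x hx => hdb x hx), setIntegral_const,
      measureReal_def, Real.volume_Ioo, ENNReal.toReal_ofReal (by linarith : (0:ℝ) ≤ 1 - a), smul_eq_mul,
      mul_comm]
    exact hm2a
  -- the permutation
  set e := StrictMono.orderIsoOfSurjective φ hφsm hsurj with hedef
  have hcoe : ⇑e.toEquiv = φ := rfl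
  have hφcont : Continuous φ := by
    have := e.continuous
    rwa [hedef, StrictMono.coe_orderIsoOfSurjective] at this
  have hinv : ∀ y, φ (e.toEquiv.symm y) = y := fun y => by
    rw [← hcoe]; exact e.toEquiv.apply_symm_apply y
  refine ⟨e.toEquiv, ⟨⟨?_, ?_, ?_, ?_⟩, ?_, ?_⟩, ?_, ?_, ?_, ?_⟩
  · intro x hx; rw [hcoe]; exact hfixφ x hx
  · rw [hcoe]; exact hsmOn
  · rw [hcoe]; exact hmapsφ
  · rw [hcoe]; exact hφcont.continuousOn
  · -- ACOn φ
    show ACOn ⇑e.toEquiv 0 1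
    rw [hcoe]
    apply lip_ACOn (lt_of_lt_of_le hs1 (le_max_left s1 m2))
    intro u v hu hv huv
    obtain ⟨k1, k2⟩ := key u v hu hv huv
    rw [abs_of_nonneg (by nlinarith [mul_nonneg hcmin.le (by linarith : (0:ℝ) ≤ v - u)])]
    exact k2
  · -- ACOn of the inverse
    show ACOn ⇑e.toEquiv.symm 0 1
    apply lip_ACOn (inv_pos.2 hcmin)
    intro u v hu hv huv
    set p := e.toEquiv.symm u with hp
    set q := e.toEquiv.symm v with hq
    have hpIcc : p ∈ Icc (0:ℝ) 1 := by
      by_contra hcon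
      have h1 : φ p = p := hfixφ p hcon
      rw [hinv] at h1
      exact hcon (h1 ▸ hu)
    have hqIcc : q ∈ Icc (0:ℝ) 1 := by
      by_contra hcon
      have h1 : φ q = q := hfixφ q hcon
      rw [hinv] at h1
      exact hcon (h1 ▸ hv)
    have hpq : p ≤ q := by
      apply hφsm.le_iff_le.1
      rw [hinv, hinv]; exact huv
    have hk := (key p q hpIcc hqIcc hpq).1
    rw [hinv, hinv] at hk
    rw [abs_of_nonneg (by linarith : (0:ℝ) ≤ q - p), inv_mul_eq_div, le_div_iff₀ hcmin]
    nlinarith [hk]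
  · rw [hcoe]; exact hφsm.monotone
  · rw [hcoe]; exact hφcont
  · rw [hcoe, hIa]
  · rw [hcoe, hIb]


/-- `H₊^AC([0,1])` is not topologically 1-generated: no cyclic
subgroup is dense. -/
theorem Hac_not_topologically_one_generated :
    ∀ f ∈ Hac 0 1,
      ¬ Dense {h : ↥(Hac 0 1) | (h : Equiv.Perm ℝ) ∈ Subgroup.zpowers f} := by
  intro f hf hd
  obtain ⟨⟨hfix, hsm, hmaps, -⟩, -, -⟩ := hf
  have hIcc0 : (0:ℝ) ∈ Icc (0:ℝ) 1 := ⟨le_refl 0, zero_le_one⟩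
  have hIcc1 : (1:ℝ) ∈ Icc (0:ℝ) 1 := ⟨zero_le_one, le_refl 1⟩
  have hf0 : f 0 = 0 := by
    have hx : f.symm 0 ∈ Icc (0:ℝ) 1 := by
      by_contra hcon
      have h1 := hfix _ hcon
      rw [Equiv.apply_symm_apply] at h1
      exact hcon (h1 ▸ hIcc0)
    have h0le : (0:ℝ) ≤ f 0 := (hmaps hIcc0).1
    rcases lt_trichotomy (f.symm 0) 0 with hlt | heq | hgt
    · exact absurd hx.1 (not_le.2 hlt)
    · rw [← heq, Equiv.apply_symm_apply]
      exact heq.symm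
    · exfalso
      have := hsm hIcc0 hx hgt
      rw [Equiv.apply_symm_apply] at this
      exact absurd h0le (not_le.2 this)
  have hf1 : f 1 = 1 := by
    have hx : f.symm 1 ∈ Icc (0:ℝ) 1 := by
      by_contra hcon
      have h1 := hfix _ hcon
      rw [Equiv.apply_symm_apply] at h1
      exact hcon (h1 ▸ hIcc1)
    have h1le : f 1 ≤ 1 := (hmaps hIcc1).2
    rcases lt_trichotomy (f.symm 1) 1 with hlt | heq | hgt
    · exfalso
      have := hsm hx hIcc1 hlt
      rw [Equiv.apply_symm_apply] at this
      exact absurd h1le (not_le.2 this)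
    · rw [← heq, Equiv.apply_symm_apply]
      exact heq.symm
    · exact absurd hx.2 (not_le.2 hgt)
  have hfmonoS : StrictMono ⇑f := strictMono_glue hfix hsm hmaps
  have hfc : Continuous ⇑f := by
    have := (StrictMono.orderIsoOfSurjective ⇑f hfmonoS f.surjective).continuous
    rwa [StrictMono.coe_orderIsoOfSurjective] at this
  have hsymm_mono : StrictMono ⇑f.symm := by
    intro x y hxy
    apply hfmonoS.lt_iff_lt.1
    rw [Equiv.apply_symm_apply, Equiv.apply_symm_apply]
    exact hxy
  have hsc : Continuous ⇑f.symm := by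
    have := (StrictMono.orderIsoOfSurjective ⇑f.symm hsymm_mono f.symm.surjective).continuous
    rwa [StrictMono.coe_orderIsoOfSurjective] at this
  have hs0 : f.symm 0 = 0 := by rw [← hf0, Equiv.symm_apply_apply]; exact hf0.symm
  have hs1' : f.symm 1 = 1 := by rw [← hf1, Equiv.symm_apply_apply]; exact hf1.symm
  have hcoeinv : ⇑(f⁻¹) = ⇑f.symm := rfl
  have hzfacts : ∀ n : ℤ, Monotone ⇑(f ^ n) ∧ Continuous ⇑(f ^ n) ∧
      (f ^ n) 0 = 0 ∧ (f ^ n) 1 = 1 := by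
    intro n
    cases n with
    | ofNat m =>
      rw [Int.ofNat_eq_natCast, zpow_natCast, Equiv.Perm.coe_pow]
      exact ⟨hfmonoS.monotone.iterate m, hfc.iterate m,
        Function.iterate_fixed hf0 m, Function.iterate_fixed hf1 m⟩
    | negSucc m =>
      rw [zpow_negSucc, ← inv_pow, Equiv.Perm.coe_pow, hcoeinv]
      exact ⟨hsymm_mono.monotone.iterate _, hsc.iterate _,
        Function.iterate_fixed hs0 _, Function.iterate_fixed hs1' _⟩
  obtain ⟨a, b, ha0, hab, hb1, horb⟩ :
      ∃ a b : ℝ, 0 < a ∧ a < b ∧ b ≤ 1 ∧ ∀ n : ℤ, (f ^ n) a ≤ a ∨ b ≤ (f ^ n) a := by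
    by_cases hid : ∀ x ∈ Icc (0:ℝ) 1, f x = x
    · have hfeq : f = 1 := by
        apply Equiv.ext
        intro x
        by_cases hx : x ∈ Icc (0:ℝ) 1
        · simpa using hid x hx
        · simpa using hfix x hx
      refine ⟨1/2, 3/4, by norm_num, by norm_num, by norm_num, fun n => Or.inl ?_⟩
      rw [hfeq, one_zpow]
      simp
    · push_neg at hid
      obtain ⟨x₀, hx₀, hne⟩ := hid
      rcases hne.lt_or_gt with hlt | hgt
      · -- f x₀ < x₀ : use a = f x₀, b = x₀
        have hA : f x₀ ∈ Icc (0:ℝ) 1 := hmaps hx₀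
        have hApos : 0 < f x₀ := by
          rcases hA.1.lt_or_eq with hp | hp
          · exact hp
          · exfalso
            have hx0 : x₀ = 0 := f.injective (by rw [hf0]; exact hp.symm)
            rw [hx0, hf0] at hlt
            exact lt_irrefl _ hlt
        have hfA_lt : f (f x₀) < f x₀ := by
          have := hsm hA hx₀ hlt
          exact this
        have claimF : ∀ m : ℕ, (⇑f)^[m] (f x₀) ≤ f x₀ := by
          intro m
          induction m with
          | zero => simp
          | succ k ih =>
            rw [Function.iterate_succ_apply']
            calc f ((⇑f)^[k] (f x₀)) ≤ f (f x₀) := hfmonoS.monotone ih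
              _ ≤ f x₀ := hfA_lt.le
        have hsymmA : f.symm (f x₀) = x₀ := Equiv.symm_apply_apply f x₀
        have h2 : x₀ ≤ f.symm x₀ := by
          have := hsymm_mono hlt
          rw [hsymmA] at this
          exact this.le
        have claimB : ∀ m : ℕ, x₀ ≤ (⇑f.symm)^[m+1] (f x₀) := by
          intro m
          induction m with
          | zero => rw [Function.iterate_one, hsymmA]
          | succ k ih =>
            rw [Function.iterate_succ_apply']
            calc x₀ ≤ f.symm x₀ := h2
              _ ≤ f.symm ((⇑f.symm)^[k+1] (f x₀)) := hsymm_mono.monotone ih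
        refine ⟨f x₀, x₀, hApos, hlt, hx₀.2, fun n => ?_⟩
        cases n with
        | ofNat m =>
          left
          rw [Int.ofNat_eq_natCast, zpow_natCast, Equiv.Perm.coe_pow]
          exact claimF m
        | negSucc m =>
          right
          rw [zpow_negSucc, ← inv_pow, Equiv.Perm.coe_pow, hcoeinv]
          exact claimB m
      · -- x₀ < f x₀ : use a = x₀, b = f x₀
        have hB : f x₀ ∈ Icc (0:ℝ) 1 := hmaps hx₀
        have ha0' : 0 < x₀ := by
          rcases hx₀.1.lt_or_eq with hp | hp
          · exact hp
          · exfalso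
            rw [← hp, hf0] at hgt
            exact lt_irrefl _ hgt
        have hfB_gt : f x₀ < f (f x₀) := hsm hx₀ hB hgt
        have claimF : ∀ m : ℕ, f x₀ ≤ (⇑f)^[m+1] x₀ := by
          intro m
          induction m with
          | zero => rw [Function.iterate_one]
          | succ k ih =>
            rw [Function.iterate_succ_apply']
            calc f x₀ ≤ f (f x₀) := hfB_gt.le
              _ ≤ f ((⇑f)^[k+1] x₀) := hfmonoS.monotone (by
                  calc f x₀ ≤ (⇑f)^[k+1] x₀ := ih)
        have h2 : f.symm x₀ ≤ x₀ := by
          have := hsymm_mono hgt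
          rw [Equiv.symm_apply_apply] at this
          exact this.le
        have claimB : ∀ m : ℕ, (⇑f.symm)^[m] x₀ ≤ x₀ := by
          intro m
          induction m with
          | zero => simp
          | succ k ih =>
            rw [Function.iterate_succ_apply']
            calc f.symm ((⇑f.symm)^[k] x₀) ≤ f.symm x₀ := hsymm_mono.monotone ih
              _ ≤ x₀ := h2
        refine ⟨x₀, f x₀, ha0', hgt, hB.2, fun n => ?_⟩
        cases n with
        | ofNat m =>
          cases m with
          | zero => left; simp
          | succ k =>
            right
            rw [Int.ofNat_eq_natCast, zpow_natCast, Equiv.Perm.coe_pow]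
            exact claimF k
        | negSucc m =>
          left
          rw [zpow_negSucc, ← inv_pow, Equiv.Perm.coe_pow, hcoeinv]
          exact claimB (m+1)
  have hε : (0:ℝ) < (b - a)/2 := by linarith
  obtain ⟨h, hmem, hhmono, hhcont, hIa, hIb⟩ := phi_pkg ha0 hab hb1
  set x : ↥(Hac 0 1) := ⟨h, hmem⟩ with hxdef
  set U : Set ↥(Hac 0 1) :=
    {g : ↥(Hac 0 1) | rho 0 1 (x : Equiv.Perm ℝ) (g : Equiv.Perm ℝ) < (b - a)/2} with hUdef
  have hUopen : IsOpen U := TopologicalSpace.isOpen_generateFrom_of_mem ⟨x, (b - a)/2, hε, rfl⟩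
  have hxU : x ∈ U := by
    show rho 0 1 h h < (b - a)/2
    simp only [rho, sub_self, abs_zero, integral_zero]
    exact hε
  obtain ⟨g, hgU, hgS⟩ := mem_closure_iff.1 (hd x) U hUopen hxU
  obtain ⟨n, hn⟩ := Subgroup.mem_zpowers_iff.1 hgS
  have hrho : rho 0 1 h (f ^ n) < (b - a)/2 := by
    rw [hn]
    exact hgU
  obtain ⟨hGm, hGc, hG0, hG1⟩ := hzfacts n
  have hlow : (b - a)/2 ≤ rho 0 1 h (f ^ n) := by
    rcases horb n with hle | hge
    · have key := rho_lower hhmono hhcont hGm hGc (le_refl (0:ℝ)) ha0.le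
        (le_trans hab.le hb1)
      rw [hIa, hG0] at key
      simp only [rho]
      linarith
    · have key := rho_lower hhmono hhcont hGm hGc ha0.le
        (le_trans hab.le hb1) (le_refl (1:ℝ))
      rw [hIb, hG1] at key
      simp only [rho]
      linarith
  linarith
end

section
/- Let φ ∈ H_+^AC([0,1]), let x_0 < x_1 < … < x_{N−1} be fixed points of φ, and let [a_0,b_0], …, [a_{N−1},b_{N−1}] ⊆ [0,1] be pairwise disjoint closed intervals, listed in increasing order, with a_i ≤ x_i ≤ b_i for each i < N. Then there exists ψ ∈ H_+^AC([0,1]) which fixes each interval [a_i, b_i] pointwise and satisfies ρ(φ, ψ) ≤ Σ_{i<N} [ |a_i − φ(a_i)| + |φ(b_i) − b_i| + (b_i − a_i) + (φ(b_i) − φ(a_i)) ]. -/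
open MeasureTheory Set

open scoped Classical

namespace BlowUp

structure Cfg (N : ℕ) where
  a : Fin N → ℝ
  b : Fin N → ℝ
  f : ℝ → ℝ
  g : ℝ → ℝ
  hmono : StrictMono f
  hgf : ∀ x, g (f x) = x
  hfg : ∀ x, f (g x) = x
  hf0 : f 0 = 0
  hf1 : f 1 = 1
  hab : ∀ i, a i ≤ b i
  ha0 : ∀ i, (0:ℝ) ≤ a i
  hb1 : ∀ i, b i ≤ 1
  hord : ∀ i j : Fin N, i < j → b i < a j

variable {N : ℕ} (c : Cfg N)

namespace Cfg

lemma gmono : StrictMono c.g := fun s t hst => by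
  have h := c.hmono.lt_iff_lt (a := c.g s) (b := c.g t)
  rw [c.hfg, c.hfg] at h
  exact h.1 hst

lemma a_lt_a {i j : Fin N} (h : i < j) : c.a i < c.a j :=
  lt_of_le_of_lt (c.hab i) (c.hord i j h)

lemma b_lt_b {i j : Fin N} (h : i < j) : c.b i < c.b j :=
  lt_of_lt_of_le (c.hord i j h) (c.hab j)

lemma b_mono {i j : Fin N} (h : i ≤ j) : c.b i ≤ c.b j := by
  rcases eq_or_lt_of_le h with rfl | h
  · exact le_rfl
  · exact (c.b_lt_b h).le

/-- node `A j` : left endpoint `a j` of the `j`-th fixed interval, or `1` past the end. -/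
def AA (j : ℕ) : ℝ := if h : j < N then c.a ⟨j, h⟩ else 1

/-- node `B j` : `0`, then right endpoints `b (j-1)` of fixed intervals, then `1`. -/
def BB : ℕ → ℝ
  | 0 => 0
  | (i+1) => if h : i < N then c.b ⟨i, h⟩ else 1

lemma AA_pos {j : ℕ} (h : j < N) : c.AA j = c.a ⟨j, h⟩ := dif_pos h
lemma AA_neg {j : ℕ} (h : ¬ j < N) : c.AA j = 1 := dif_neg h
lemma BB_zero : c.BB 0 = 0 := rfl
lemma BB_pos {i : ℕ} (h : i < N) : c.BB (i+1) = c.b ⟨i, h⟩ := dif_pos h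
lemma BB_neg {i : ℕ} (h : ¬ i < N) : c.BB (i+1) = 1 := dif_neg h

lemma BB_nonneg (j : ℕ) : 0 ≤ c.BB j := by
  match j with
  | 0 => exact le_rfl
  | (i+1) =>
    by_cases h : i < N
    · rw [c.BB_pos h]; exact (c.ha0 _).trans (c.hab _)
    · rw [c.BB_neg h]; norm_num

lemma AA_le_one (j : ℕ) : c.AA j ≤ 1 := by
  by_cases h : j < N
  · rw [c.AA_pos h]; exact (c.hab _).trans (c.hb1 _)
  · rw [c.AA_neg h]

lemma BB_le_AA (j : ℕ) : c.BB j ≤ c.AA j := by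
  match j with
  | 0 =>
    show (0:ℝ) ≤ c.AA 0
    by_cases h : 0 < N
    · rw [c.AA_pos h]; exact c.ha0 _
    · rw [c.AA_neg h]; norm_num
  | (i+1) =>
    by_cases h : i < N
    · rw [c.BB_pos h]
      by_cases h2 : i + 1 < N
      · rw [c.AA_pos h2]; exact (c.hord ⟨i, h⟩ ⟨i+1, h2⟩ (by simp)).le
      · rw [c.AA_neg h2]; exact c.hb1 _
    · rw [c.BB_neg h, c.AA_neg (fun h2 => h (Nat.lt_of_succ_lt h2))]

lemma AA_le_BB (j : ℕ) : c.AA j ≤ c.BB (j+1) := by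
  by_cases h : j < N
  · rw [c.AA_pos h, c.BB_pos h]; exact c.hab _
  · rw [c.AA_neg h, c.BB_neg h]

lemma BB_mono : Monotone c.BB :=
  monotone_nat_of_le_succ (fun j => (c.BB_le_AA j).trans (c.AA_le_BB j))

lemma AA_mono : Monotone c.AA :=
  monotone_nat_of_le_succ (fun j => (c.AA_le_BB j).trans (c.BB_le_AA (j+1)))

lemma AA_nonneg (j : ℕ) : 0 ≤ c.AA j := (c.BB_nonneg j).trans (c.BB_le_AA j)
lemma BB_le_one (j : ℕ) : c.BB j ≤ 1 := (c.BB_le_AA j).trans (c.AA_le_one j)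

lemma AA_last : c.AA N = 1 := c.AA_neg (lt_irrefl N)

/-- the interleaved sequence of nodes: `p (2j) = B j`, `p (2j+1) = A j`. -/
def pp (k : ℕ) : ℝ := if k % 2 = 0 then c.BB (k/2) else c.AA (k/2)

lemma pp_even (j : ℕ) : c.pp (2*j) = c.BB j := by
  simp [pp, Nat.mul_div_cancel_left _ (by norm_num : 0 < 2), Nat.mul_mod_right]

lemma pp_odd (j : ℕ) : c.pp (2*j+1) = c.AA j := by
  have h1 : (2*j+1) % 2 = 1 := by omega
  have h2 : (2*j+1) / 2 = j := by omega
  simp [pp, h1, h2]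

lemma pp_zero : c.pp 0 = 0 := by simpa [c.BB_zero] using c.pp_even 0
lemma pp_last : c.pp (2*N+1) = 1 := by rw [c.pp_odd, c.AA_last]

lemma pp_mono : Monotone c.pp := by
  apply monotone_nat_of_le_succ
  intro k
  rcases Nat.even_or_odd k with ⟨j, hj⟩ | ⟨j, hj⟩
  · subst hj
    rw [(by ring_nf : j + j = 2*j), c.pp_even, (by ring_nf : 2*j+1 = 2*j+1), c.pp_odd]
    exact c.BB_le_AA j
  · subst hj
    rw [c.pp_odd, (by ring : 2*j+1+1 = 2*(j+1)), c.pp_even]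
    exact c.AA_le_BB j

lemma pp_nonneg (k : ℕ) : 0 ≤ c.pp k := by
  have := c.pp_mono (Nat.zero_le k); rwa [c.pp_zero] at this

lemma pp_le_one (k : ℕ) : c.pp k ≤ 1 := by
  by_cases h : k ≤ 2*N+1
  · have := c.pp_mono h; rwa [c.pp_last] at this
  · push_neg at h
    rcases Nat.even_or_odd k with ⟨j, hj⟩ | ⟨j, hj⟩
    · subst hj; rw [(by ring_nf : j + j = 2*j), c.pp_even]; exact c.BB_le_one j
    · subst hj; rw [c.pp_odd]; exact c.AA_le_one j

end Cfg

lemma lower_card {N : ℕ} (S : Finset (Fin N))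
    (hS : ∀ i₁ i₂ : Fin N, i₁ ≤ i₂ → i₂ ∈ S → i₁ ∈ S) (i : Fin N) :
    i ∈ S ↔ (i : ℕ) < S.card := by
  constructor
  · intro hi
    have hsub : (Finset.range ((i:ℕ)+1)).attachFin
        (fun m hm => lt_of_le_of_lt (Nat.lt_succ_iff.1 (Finset.mem_range.1 hm)) i.2) ⊆ S := by
      intro i' hi'
      rw [Finset.mem_attachFin, Finset.mem_range, Nat.lt_succ_iff] at hi'
      exact hS i' i (Fin.le_def.2 hi') hi
    have := Finset.card_le_card hsub
    rw [Finset.card_attachFin, Finset.card_range] at this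
    omega
  · intro hlt
    by_contra hi
    have hsub : S ⊆ (Finset.range (i:ℕ)).attachFin
        (fun m hm => lt_of_lt_of_le (Finset.mem_range.1 hm) i.2.le) := by
      intro i'' hi''
      rw [Finset.mem_attachFin, Finset.mem_range]
      by_contra hge
      exact hi (hS i i'' (Fin.le_def.2 (le_of_not_gt hge)) hi'')
    have := Finset.card_le_card hsub
    rw [Finset.card_attachFin, Finset.card_range] at this
    omega

lemma card_filter_val_lt {N : ℕ} (j : ℕ) (hj : j ≤ N) :
    (Finset.univ.filter (fun i : Fin N => (i:ℕ) < j)).card = j := by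
  have : (Finset.univ.filter (fun i : Fin N => (i:ℕ) < j)) =
      (Finset.range j).attachFin (fun m hm => lt_of_lt_of_le (Finset.mem_range.1 hm) hj) := by
    ext i
    simp [Finset.mem_attachFin]
  rw [this, Finset.card_attachFin, Finset.card_range]

namespace Cfg

/-- index of the gap containing `y`. -/
noncomputable def J (y : ℝ) : ℕ := (Finset.univ.filter (fun i : Fin N => c.b i ≤ y)).card

lemma J_le (y : ℝ) : c.J y ≤ N := by
  exact (Finset.card_filter_le Finset.univ (fun i : Fin N => c.b i ≤ y)).trans (by simp)

lemma b_le_iff (y : ℝ) (i : Fin N) : c.b i ≤ y ↔ (i:ℕ) < c.J y := by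
  have h := lower_card (Finset.univ.filter (fun i : Fin N => c.b i ≤ y))
    (fun i₁ i₂ h12 h2 => by
      rw [Finset.mem_filter] at h2 ⊢
      exact ⟨Finset.mem_univ _, (c.b_mono h12).trans h2.2⟩) i
  rw [Finset.mem_filter] at h
  simpa [J] using h

/-- `y` lies in `[0,1]` but in none of the fixed intervals. -/
def br (y : ℝ) : Prop := y ∈ Icc (0:ℝ) 1 ∧ ∀ i, y ∉ Icc (c.a i) (c.b i)

lemma J_spec {y : ℝ} (hbr : c.br y) : c.BB (c.J y) ≤ y ∧ y ≤ c.AA (c.J y) := by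
  constructor
  · match hj : c.J y with
    | 0 => exact hbr.1.1
    | (j'+1) =>
      have hj' : j' < N := by have := c.J_le y; omega
      rw [c.BB_pos hj']
      exact (c.b_le_iff y ⟨j', hj'⟩).2 (by rw [hj]; exact Nat.lt_succ_self j')
  · by_cases h : c.J y < N
    · rw [c.AA_pos h]
      have hnb : ¬ c.b ⟨c.J y, h⟩ ≤ y := by
        rw [c.b_le_iff]; simp
      push_neg at hnb
      by_contra hya
      push_neg at hya
      exact hbr.2 ⟨c.J y, h⟩ ⟨hya.le, hnb.le⟩
    · rw [c.AA_neg h]; exact hbr.1.2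

lemma J_eq {t : ℝ} {j : ℕ} (hbr : c.br t) (hj : j ≤ N)
    (h1 : c.BB j ≤ t) (h2 : t ≤ c.AA j) : c.J t = j := by
  have hfil : (Finset.univ.filter (fun i : Fin N => c.b i ≤ t)) =
      (Finset.univ.filter (fun i : Fin N => (i:ℕ) < j)) := by
    ext i
    simp only [Finset.mem_filter, Finset.mem_univ, true_and]
    constructor
    · intro hbi
      by_contra hge
      push_neg at hge
      have hAA : c.AA j ≤ c.a i := by
        have h' : c.AA j ≤ c.AA (i:ℕ) := c.AA_mono hge
        rwa [c.AA_pos i.2, congrArg c.a (Fin.eta i i.2)] at h'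
      exact hbr.2 i ⟨(c.hab i).trans hbi, h2.trans hAA |>.trans (c.hab i)⟩
    · intro hij
      have : c.b i = c.BB ((i:ℕ)+1) := (c.BB_pos i.2).symm
      rw [this]
      exact (c.BB_mono hij).trans h1
  rw [J, hfil, card_filter_val_lt j hj]

/-- slope of the affine correction on gap `j`. -/
noncomputable def cc (j : ℕ) : ℝ :=
  if c.AA j = c.BB j then 1 else (c.AA j - c.BB j) / (c.f (c.AA j) - c.f (c.BB j))

noncomputable def dd (j : ℕ) : ℝ := c.BB j - c.cc j * c.f (c.BB j)

/-- the map used on gap `j` : affine rescaling of `f`. -/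
noncomputable def gm (j : ℕ) (y : ℝ) : ℝ := c.cc j * c.f y + c.dd j

/-- affine part of the inverse gap map. -/
noncomputable def lm (j : ℕ) (t : ℝ) : ℝ := (c.cc j)⁻¹ * (t - c.dd j)

/-- the inverse gap map. -/
noncomputable def gmi (j : ℕ) (y : ℝ) : ℝ := c.g (c.lm j y)

lemma cc_pos (j : ℕ) : 0 < c.cc j := by
  rw [cc]
  split_ifs with h
  · norm_num
  · have hlt : c.BB j < c.AA j := lt_of_le_of_ne (c.BB_le_AA j) (Ne.symm h)
    exact div_pos (by linarith) (by have := c.hmono hlt; linarith)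

lemma cc_spec (j : ℕ) : c.cc j * (c.f (c.AA j) - c.f (c.BB j)) = c.AA j - c.BB j := by
  rw [cc]
  split_ifs with h
  · rw [h]; ring
  · have hlt : c.BB j < c.AA j := lt_of_le_of_ne (c.BB_le_AA j) (Ne.symm h)
    have hne : c.f (c.AA j) - c.f (c.BB j) ≠ 0 := by have := c.hmono hlt; linarith
    field_simp

lemma gm_mono (j : ℕ) : StrictMono (c.gm j) := fun s t hst => by
  have := c.hmono hst
  have := c.cc_pos j
  unfold gm; nlinarith

lemma gm_BB (j : ℕ) : c.gm j (c.BB j) = c.BB j := by unfold gm dd; ring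

lemma gm_AA (j : ℕ) : c.gm j (c.AA j) = c.AA j := by
  have h := c.cc_spec j
  unfold gm dd; nlinarith [c.cc_spec j]

lemma lm_mono (j : ℕ) : StrictMono (c.lm j) := fun s t hst => by
  have h1 := c.cc_pos j
  have h2 : 0 < (c.cc j)⁻¹ := inv_pos.2 h1
  unfold lm; nlinarith

lemma lm_gm (j : ℕ) (y : ℝ) : c.lm j (c.gm j y) = c.f y := by
  have h1 := (c.cc_pos j).ne'
  unfold lm gm; field_simp; ring

lemma lm_BB (j : ℕ) : c.lm j (c.BB j) = c.f (c.BB j) := by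
  have h := c.lm_gm j (c.BB j); rwa [c.gm_BB j] at h

lemma lm_AA (j : ℕ) : c.lm j (c.AA j) = c.f (c.AA j) := by
  have h := c.lm_gm j (c.AA j); rwa [c.gm_AA j] at h

lemma gmi_gm (j : ℕ) (y : ℝ) : c.gmi j (c.gm j y) = y := by
  rw [gmi, c.lm_gm, c.hgf]

lemma gm_lm (j : ℕ) (t : ℝ) : c.cc j * (c.lm j t) + c.dd j = t := by
  have h1 := (c.cc_pos j).ne'
  unfold lm; field_simp; ring

lemma gm_gmi (j : ℕ) (y : ℝ) : c.gm j (c.gmi j y) = y := by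
  rw [gmi, gm, c.hfg, c.gm_lm]

lemma gmi_mono (j : ℕ) : StrictMono (c.gmi j) :=
  fun s t hst => c.gmono (c.lm_mono j hst)

lemma gmi_BB (j : ℕ) : c.gmi j (c.BB j) = c.BB j := by
  rw [gmi, c.lm_BB, c.hgf]

lemma gmi_AA (j : ℕ) : c.gmi j (c.AA j) = c.AA j := by
  rw [gmi, c.lm_AA, c.hgf]

/-- a good family of gap maps: strictly monotone, fixing the gap endpoints. -/
structure Good (m : ℕ → ℝ → ℝ) : Prop where
  mono : ∀ j, StrictMono (m j)
  endB : ∀ j, m j (c.BB j) = c.BB j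
  endA : ∀ j, m j (c.AA j) = c.AA j

lemma gm_good : c.Good c.gm := ⟨c.gm_mono, c.gm_BB, c.gm_AA⟩
lemma gmi_good : c.Good c.gmi := ⟨c.gmi_mono, c.gmi_BB, c.gmi_AA⟩

/-- the glued map. -/
noncomputable def Psi (m : ℕ → ℝ → ℝ) (y : ℝ) : ℝ := if c.br y then m (c.J y) y else y

lemma psi_fixed {m : ℕ → ℝ → ℝ} {y : ℝ} (i : Fin N) (h : y ∈ Icc (c.a i) (c.b i)) :
    c.Psi m y = y := by
  rw [Psi, if_neg]
  intro hbr
  exact hbr.2 i h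

lemma psi_out {m : ℕ → ℝ → ℝ} {y : ℝ} (h : y ∉ Icc (0:ℝ) 1) : c.Psi m y = y := by
  rw [Psi, if_neg]
  intro hbr
  exact h hbr.1

/-- the glued map agrees with `m j` on the closure of gap `j`. -/
lemma psi_gap {m : ℕ → ℝ → ℝ} (hG : c.Good m) {j : ℕ} (hj : j ≤ N) {y : ℝ}
    (hy : y ∈ Icc (c.BB j) (c.AA j)) : c.Psi m y = m j y := by
  by_cases hbr : c.br y
  · rw [Psi, if_pos hbr, c.J_eq hbr hj hy.1 hy.2]
  · rw [Psi, if_neg hbr]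
    have hy01 : y ∈ Icc (0:ℝ) 1 :=
      ⟨(c.BB_nonneg j).trans hy.1, hy.2.trans (c.AA_le_one j)⟩
    have : ∃ i : Fin N, y ∈ Icc (c.a i) (c.b i) := by
      by_contra hno
      push_neg at hno
      exact hbr ⟨hy01, fun i hi => hno i hi⟩
    obtain ⟨i, hai, hbi⟩ := this
    by_cases hij : j ≤ (i:ℕ)
    · have h1 : c.AA j ≤ c.a i := by
        have h' := c.AA_mono hij
        rwa [c.AA_pos i.2, congrArg c.a (Fin.eta i i.2)] at h'
      have hyA : y = c.AA j := le_antisymm hy.2 (h1.trans hai)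
      rw [hyA, hG.endA]
    · push_neg at hij
      have h1 : c.b i ≤ c.BB j := by
        have h' : c.BB ((i:ℕ)+1) ≤ c.BB j := c.BB_mono hij
        rwa [c.BB_pos i.2, congrArg c.b (Fin.eta i i.2)] at h'
      have hyB : y = c.BB j := le_antisymm (hbi.trans h1) hy.1
      rw [hyB, hG.endB]

/-- a good gap map preserves the gap set and the gap index. -/
lemma psi_br {m : ℕ → ℝ → ℝ} (hG : c.Good m) {y : ℝ} (hbr : c.br y) :
    c.br (m (c.J y) y) ∧ c.J (m (c.J y) y) = c.J y := by
  set j := c.J y with hj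
  obtain ⟨h1, h2⟩ := c.J_spec hbr
  have hjN : j ≤ N := c.J_le y
  have hz1 : c.BB j ≤ m j y := by
    have := (hG.mono j).monotone h1; rwa [hG.endB] at this
  have hz2 : m j y ≤ c.AA j := by
    have := (hG.mono j).monotone h2; rwa [hG.endA] at this
  have hzbr : c.br (m j y) := by
    refine ⟨⟨(c.BB_nonneg j).trans hz1, hz2.trans (c.AA_le_one j)⟩, fun i hi => ?_⟩
    by_cases hij : j ≤ (i:ℕ)
    · have hA : c.AA j ≤ c.a i := by
        have h' := c.AA_mono hij
        rwa [c.AA_pos i.2, congrArg c.a (Fin.eta i i.2)] at h'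
      have hmA : m j y = c.AA j := le_antisymm hz2 (hA.trans hi.1)
      have hyA : y = c.AA j := (hG.mono j).injective (by rw [hmA, hG.endA])
      have haA : c.a i = c.AA j := le_antisymm (by rw [← hmA]; exact hi.1) hA
      refine hbr.2 i ⟨le_of_eq (haA.trans hyA.symm), ?_⟩
      rw [hyA, ← hmA]; exact hi.2
    · push_neg at hij
      have hB : c.b i ≤ c.BB j := by
        have h' : c.BB ((i:ℕ)+1) ≤ c.BB j := c.BB_mono hij
        rwa [c.BB_pos i.2, congrArg c.b (Fin.eta i i.2)] at h'
      have hmB : m j y = c.BB j := le_antisymm (hi.2.trans hB) hz1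
      have hyB : y = c.BB j := (hG.mono j).injective (by rw [hmB, hG.endB])
      have hbB : c.b i = c.BB j := le_antisymm hB (by rw [← hmB]; exact hi.2)
      exact hbr.2 i ⟨by rw [hyB, ← hbB]; exact c.hab i, le_of_eq (hyB.trans hbB.symm)⟩
  exact ⟨hzbr, c.J_eq hzbr hjN hz1 hz2⟩

lemma psi_comp {m m' : ℕ → ℝ → ℝ} (hG : c.Good m) (hinv : ∀ j t, m' j (m j t) = t)
    (y : ℝ) : c.Psi m' (c.Psi m y) = y := by
  by_cases hbr : c.br y
  · have hy : c.Psi m y = m (c.J y) y := by rw [Psi, if_pos hbr]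
    obtain ⟨hzbr, hJ⟩ := c.psi_br hG hbr
    rw [hy, Psi, if_pos hzbr, hJ, hinv]
  · have hy : c.Psi m y = y := by rw [Psi, if_neg hbr]
    rw [hy, Psi, if_neg hbr]

end Cfg

/-- value of the glued map on piece `k`. -/
noncomputable def pm (m : ℕ → ℝ → ℝ) (k : ℕ) (y : ℝ) : ℝ :=
  if k % 2 = 0 then m (k/2) y else y

namespace Cfg

lemma psi_pm {m : ℕ → ℝ → ℝ} (hG : c.Good m) {k : ℕ} (hk : k < 2*N+1) {y : ℝ}
    (hy : y ∈ Icc (c.pp k) (c.pp (k+1))) : c.Psi m y = pm m k y := by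
  rcases Nat.even_or_odd k with ⟨j, hj⟩ | ⟨j, hj⟩
  · have hk2 : k = 2*j := by omega
    subst hk2
    have h1 : (2*j) % 2 = 0 := by omega
    have h2 : (2*j) / 2 = j := by omega
    rw [pm, if_pos h1, h2]
    rw [c.pp_even, (by ring : 2*j+1 = 2*j+1), c.pp_odd] at hy
    exact c.psi_gap hG (by omega) hy
  · have hk2 : k = 2*j+1 := by omega
    subst hk2
    have hjN : j < N := by omega
    have h1 : ¬ (2*j+1) % 2 = 0 := by omega
    rw [pm, if_neg h1]
    rw [c.pp_odd, (by ring : 2*j+1+1 = 2*(j+1)), c.pp_even, c.AA_pos hjN, c.BB_pos hjN] at hy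
    exact c.psi_fixed ⟨j, hjN⟩ hy

lemma pm_mono {m : ℕ → ℝ → ℝ} (hG : c.Good m) (k : ℕ) : StrictMono (pm m k) := by
  unfold pm
  split_ifs
  · exact hG.mono _
  · exact strictMono_id

lemma pm_left {m : ℕ → ℝ → ℝ} (hG : c.Good m) (k : ℕ) : pm m k (c.pp k) = c.pp k := by
  rcases Nat.even_or_odd k with ⟨j, hj⟩ | ⟨j, hj⟩
  · have hk2 : k = 2*j := by omega
    subst hk2
    rw [pm, if_pos (by omega : (2*j) % 2 = 0), (by omega : (2*j)/2 = j), c.pp_even, hG.endB]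
  · have hk2 : k = 2*j+1 := by omega
    subst hk2
    rw [pm, if_neg (by omega : ¬ (2*j+1) % 2 = 0)]

lemma pm_right {m : ℕ → ℝ → ℝ} (hG : c.Good m) (k : ℕ) :
    pm m k (c.pp (k+1)) = c.pp (k+1) := by
  rcases Nat.even_or_odd k with ⟨j, hj⟩ | ⟨j, hj⟩
  · have hk2 : k = 2*j := by omega
    subst hk2
    rw [pm, if_pos (by omega : (2*j) % 2 = 0), (by omega : (2*j)/2 = j),
      (by ring : 2*j+1 = 2*j+1), c.pp_odd, hG.endA]
  · have hk2 : k = 2*j+1 := by omega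
    subst hk2
    rw [pm, if_neg (by omega : ¬ (2*j+1) % 2 = 0)]

lemma cover {y : ℝ} (hy : y ∈ Icc (0:ℝ) 1) :
    ∃ k, k ≤ 2*N ∧ c.pp k ≤ y ∧ y ≤ c.pp (k+1) ∧
      ∀ k', k' ≤ 2*N → c.pp k' ≤ y → k' ≤ k := by
  have hP0 : c.pp 0 ≤ y := by simpa [c.pp_zero] using hy.1
  refine ⟨Nat.findGreatest (fun k' => c.pp k' ≤ y) (2*N), Nat.findGreatest_le _, ?_, ?_, ?_⟩
  · exact Nat.findGreatest_spec (P := fun k' => c.pp k' ≤ y) (Nat.zero_le _) hP0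
  · by_cases hend : Nat.findGreatest (fun k' => c.pp k' ≤ y) (2*N) = 2*N
    · rw [hend, (by ring : 2*N+1 = 2*N+1), c.pp_last]
      exact hy.2
    · have hlt : Nat.findGreatest (fun k' => c.pp k' ≤ y) (2*N) + 1 ≤ 2*N :=
        Nat.succ_le_of_lt (lt_of_le_of_ne (Nat.findGreatest_le _) hend)
      have hng : ¬ c.pp (Nat.findGreatest (fun k' => c.pp k' ≤ y) (2*N) + 1) ≤ y :=
        Nat.findGreatest_is_greatest (P := fun k' => c.pp k' ≤ y) (Nat.lt_succ_self _) hlt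
      exact (not_le.1 hng).le
  · intro k' hk' hpk'
    exact Nat.le_findGreatest (P := fun k'' => c.pp k'' ≤ y) hk' hpk'

lemma psi_mem01 {m : ℕ → ℝ → ℝ} (hG : c.Good m) {y : ℝ} (hy : y ∈ Icc (0:ℝ) 1) :
    c.Psi m y ∈ Icc (0:ℝ) 1 := by
  obtain ⟨k, hk, h1, h2, -⟩ := c.cover hy
  rw [c.psi_pm hG (by omega) ⟨h1, h2⟩]
  constructor
  · refine (c.pp_nonneg k).trans ?_
    rw [← Cfg.pm_left c hG k]
    exact ((Cfg.pm_mono c hG k).monotone h1)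
  · refine le_trans ?_ (c.pp_le_one (k+1))
    rw [← Cfg.pm_right c hG k]
    exact ((Cfg.pm_mono c hG k).monotone h2)

lemma psi_strictMonoOn {m : ℕ → ℝ → ℝ} (hG : c.Good m) :
    StrictMonoOn (c.Psi m) (Icc (0:ℝ) 1) := by
  intro y hy z hz hyz
  obtain ⟨ky, hky, hy1, hy2, hymax⟩ := c.cover hy
  obtain ⟨kz, hkz, hz1, hz2, hzmax⟩ := c.cover hz
  have hkyz : ky ≤ kz := hzmax ky hky (hy1.trans hyz.le)
  rw [c.psi_pm hG (by omega) ⟨hy1, hy2⟩, c.psi_pm hG (by omega) ⟨hz1, hz2⟩]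
  rcases eq_or_lt_of_le hkyz with rfl | hlt
  · exact Cfg.pm_mono c hG ky hyz
  · have h1 : y < c.pp (ky+1) := by
      by_contra h
      push_neg at h
      have := hymax (ky+1) (by omega) h
      omega
    calc pm m ky y < pm m ky (c.pp (ky+1)) := Cfg.pm_mono c hG ky h1
      _ = c.pp (ky+1) := Cfg.pm_right c hG ky
      _ ≤ c.pp kz := c.pp_mono hlt
      _ = pm m kz (c.pp kz) := (Cfg.pm_left c hG kz).symm
      _ ≤ pm m kz z := (Cfg.pm_mono c hG kz).monotone hz1

lemma psi_strictMono {m : ℕ → ℝ → ℝ} (hG : c.Good m) : StrictMono (c.Psi m) := by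
  intro y z hyz
  by_cases hy : y ∈ Icc (0:ℝ) 1 <;> by_cases hz : z ∈ Icc (0:ℝ) 1
  · exact c.psi_strictMonoOn hG hy hz hyz
  · rw [c.psi_out hz]
    have hz1 : 1 < z := by
      rcases not_and_or.1 hz with h | h <;> push_neg at h
      · linarith [hy.1, hyz]
      · exact h
    exact lt_of_le_of_lt (c.psi_mem01 hG hy).2 hz1
  · rw [c.psi_out hy]
    have hy0 : y < 0 := by
      rcases not_and_or.1 hy with h | h <;> push_neg at h
      · exact h
      · linarith [hz.2, hyz]
    exact lt_of_lt_of_le hy0 (c.psi_mem01 hG hz).1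
  · rw [c.psi_out hy, c.psi_out hz]
    exact hyz

end Cfg

/-- clamp `t` into `[u,v]`. -/
noncomputable def clamp (u v t : ℝ) : ℝ := max u (min v t)

lemma clamp_mono (u v : ℝ) : Monotone (clamp u v) := fun s t hst =>
  max_le_max le_rfl (min_le_min le_rfl hst)

lemma min_sub_min_le (v : ℝ) {s t : ℝ} (hst : s ≤ t) : min v t - min v s ≤ t - s := by
  rcases le_total t v with h | h
  · rw [min_eq_right h, min_eq_right (hst.trans h)]
  · rcases le_total s v with h2 | h2
    · rw [min_eq_left h, min_eq_right h2]; linarith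
    · rw [min_eq_left h, min_eq_left h2]; linarith

lemma max_sub_max_le (u : ℝ) {s t : ℝ} (hst : s ≤ t) : max u t - max u s ≤ t - s := by
  rcases le_total u s with h | h
  · rw [max_eq_right h, max_eq_right (h.trans hst)]
  · rcases le_total u t with h2 | h2
    · rw [max_eq_right h2, max_eq_left h]; linarith
    · rw [max_eq_left h2, max_eq_left h]; linarith

lemma clamp_contract (u v : ℝ) {s t : ℝ} (hst : s ≤ t) :
    clamp u v t - clamp u v s ≤ t - s := by
  have h1 : min v s ≤ min v t := min_le_min le_rfl hst
  calc clamp u v t - clamp u v s ≤ min v t - min v s := max_sub_max_le u h1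
    _ ≤ t - s := min_sub_min_le v hst

lemma sum_split (n : ℕ) (g : ℕ → ℝ) :
    ∑ k ∈ Finset.range (2*n+1), g k =
      (∑ j ∈ Finset.range (n+1), g (2*j)) + ∑ j ∈ Finset.range n, g (2*j+1) := by
  induction n with
  | zero => simp
  | succ n ih =>
    have h1 : 2*(n+1)+1 = (2*n+1) + 1 + 1 := by ring
    rw [h1, Finset.sum_range_succ, Finset.sum_range_succ,
      Finset.sum_range_succ (fun j => g (2*j)), Finset.sum_range_succ (fun j => g (2*j+1)), ih]
    have e1 : 2*n+1 = 2*n+1 := rfl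
    have e2 : 2*n+1+1 = 2*(n+1) := by ring
    rw [e2]
    ring

namespace Cfg

lemma clamp_first {u v : ℝ} (hu : 0 ≤ u) (huv : u ≤ v) : clamp u v (c.pp 0) = u := by
  rw [c.pp_zero, clamp, min_eq_right (hu.trans huv), max_eq_left hu]

lemma clamp_last {u v : ℝ} (huv : u ≤ v) (hv : v ≤ 1) : clamp u v (c.pp (2*N+1)) = v := by
  rw [c.pp_last, clamp, min_eq_left hv, max_eq_right huv]

lemma term_cases {u v : ℝ} (k : ℕ) :
    clamp u v (c.pp k) = clamp u v (c.pp (k+1)) ∨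
    (clamp u v (c.pp k) ∈ Icc (c.pp k) (c.pp (k+1)) ∧
     clamp u v (c.pp (k+1)) ∈ Icc (c.pp k) (c.pp (k+1))) := by
  have hpk : c.pp k ≤ c.pp (k+1) := c.pp_mono (Nat.le_succ k)
  by_cases h1 : v < c.pp k
  · left
    rw [clamp, clamp, min_eq_left h1.le, min_eq_left (h1.le.trans hpk)]
  · push_neg at h1
    by_cases h2 : c.pp (k+1) < u
    · left
      rw [clamp, clamp, max_eq_left ((min_le_right _ _).trans (hpk.trans h2.le)),
        max_eq_left ((min_le_right _ _).trans h2.le)]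
    · push_neg at h2
      right
      constructor
      · constructor
        · rw [clamp, min_eq_right h1]; exact le_max_right _ _
        · rw [clamp]; exact max_le h2 ((min_eq_right h1).le.trans hpk)
      · constructor
        · rw [clamp]
          exact le_max_of_le_right (le_min h1 hpk)
        · rw [clamp]
          exact max_le h2 (min_le_right _ _)

/-- key estimate for the forward map: increments controlled by `id` and `f`. -/
lemma psi_gm_diff {u v : ℝ} (hu : 0 ≤ u) (huv : u ≤ v) (hv : v ≤ 1) (Cb : ℝ)
    (hCb : ∀ j, j ≤ N → c.cc j ≤ Cb) :
    c.Psi c.gm v - c.Psi c.gm u ≤ (v - u) + Cb * (c.f v - c.f u) := by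
  have hCb0 : 0 ≤ Cb := le_trans (c.cc_pos 0).le (hCb 0 (Nat.zero_le N))
  set w : ℕ → ℝ := fun t => clamp u v (c.pp t) with hw
  have hw0 : w 0 = u := c.clamp_first hu huv
  have hwlast : w (2*N+1) = v := c.clamp_last huv hv
  have hwmem : ∀ k, w k ∈ Icc (0:ℝ) 1 := by
    intro k
    rw [hw]
    constructor
    · exact le_trans hu (le_max_left _ _)
    · exact max_le (huv.trans hv) ((min_le_left _ _).trans hv)
  have hwm : ∀ k, w k ≤ w (k+1) := fun k => clamp_mono u v (c.pp_mono (Nat.le_succ k))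
  have key : ∀ k < 2*N+1,
      c.Psi c.gm (w (k+1)) - c.Psi c.gm (w k) ≤
        (w (k+1) - w k) + Cb * (c.f (w (k+1)) - c.f (w k)) := by
    intro k hk
    have hfm : c.f (w k) ≤ c.f (w (k+1)) := c.hmono.monotone (hwm k)
    rcases c.term_cases (u := u) (v := v) k with h | ⟨hm1, hm2⟩
    · rw [hw]
      simp only []
      rw [← h]
      simp
    · rw [c.psi_pm c.gm_good hk hm1, c.psi_pm c.gm_good hk hm2]
      rcases Nat.even_or_odd k with ⟨j, hj⟩ | ⟨j, hj⟩
      · have hk2 : k = 2*j := by omega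
        subst hk2
        have hjN : j ≤ N := by omega
        rw [pm, if_pos (by omega : (2*j) % 2 = 0), (by omega : (2*j)/2 = j), pm,
          if_pos (by omega : (2*j) % 2 = 0), (by omega : (2*j)/2 = j)]
        have hgm : c.gm j (w (2*j+1)) - c.gm j (w (2*j)) =
            c.cc j * (c.f (w (2*j+1)) - c.f (w (2*j))) := by
          unfold gm; ring
        rw [hgm]
        have h1 : c.cc j * (c.f (w (2*j+1)) - c.f (w (2*j))) ≤
            Cb * (c.f (w (2*j+1)) - c.f (w (2*j))) :=
          mul_le_mul_of_nonneg_right (hCb j hjN) (by linarith)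
        have h2 : 0 ≤ w (2*j+1) - w (2*j) := by linarith [hwm (2*j)]
        linarith
      · have hk2 : k = 2*j+1 := by omega
        subst hk2
        rw [pm, if_neg (by omega : ¬ (2*j+1) % 2 = 0), pm,
          if_neg (by omega : ¬ (2*j+1) % 2 = 0)]
        nlinarith [hwm (2*j+1)]
  have tele : ∀ F : ℕ → ℝ, ∑ k ∈ Finset.range (2*N+1), (F (k+1) - F k) = F (2*N+1) - F 0 :=
    fun F => Finset.sum_range_sub F (2*N+1)
  have hsum : c.Psi c.gm v - c.Psi c.gm u =
      ∑ k ∈ Finset.range (2*N+1), (c.Psi c.gm (w (k+1)) - c.Psi c.gm (w k)) := by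
    rw [tele (fun k => c.Psi c.gm (w k)), hw0, hwlast]
  rw [hsum]
  calc ∑ k ∈ Finset.range (2*N+1), (c.Psi c.gm (w (k+1)) - c.Psi c.gm (w k))
      ≤ ∑ k ∈ Finset.range (2*N+1),
          ((w (k+1) - w k) + Cb * (c.f (w (k+1)) - c.f (w k))) := by
        apply Finset.sum_le_sum
        intro k hk
        exact key k (Finset.mem_range.1 hk)
    _ = (v - u) + Cb * (c.f v - c.f u) := by
        rw [Finset.sum_add_distrib, tele w, ← Finset.mul_sum,
          tele (fun k => c.f (w k)), hw0, hwlast]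

/-- the forward glued map is absolutely continuous. -/
lemma AC_psi_gm (hACf : ACOn c.f 0 1) : ACOn (c.Psi c.gm) 0 1 := by
  intro ε hε
  set Cb : ℝ := 1 + ∑ j ∈ Finset.range (N+1), c.cc j with hCbdef
  have hccnn : ∀ j ∈ Finset.range (N+1), (0:ℝ) ≤ c.cc j := fun j _ => (c.cc_pos j).le
  have hsumnn : (0:ℝ) ≤ ∑ j ∈ Finset.range (N+1), c.cc j := Finset.sum_nonneg hccnn
  have hCbpos : 0 < Cb := by rw [hCbdef]; linarith
  have hCble : ∀ j, j ≤ N → c.cc j ≤ Cb := by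
    intro j hj
    have h1 : c.cc j ≤ ∑ j' ∈ Finset.range (N+1), c.cc j' :=
      Finset.single_le_sum hccnn (Finset.mem_range.2 (by omega))
    rw [hCbdef]; linarith
  obtain ⟨δ₁, hδ₁, H1⟩ := hACf (ε/(2*Cb)) (by positivity)
  refine ⟨min δ₁ (ε/2), lt_min hδ₁ (by positivity), ?_⟩
  intro n u v hmem hdisj hsum
  have hφ := H1 n u v hmem hdisj (hsum.trans (min_le_left _ _))
  have hmono := (c.psi_strictMono c.gm_good).monotone
  calc ∑ i, |c.Psi c.gm (v i) - c.Psi c.gm (u i)|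
      = ∑ i, (c.Psi c.gm (v i) - c.Psi c.gm (u i)) := by
        apply Finset.sum_congr rfl
        intro i _
        exact abs_of_nonneg (sub_nonneg.2 (hmono (hmem i).2.1))
    _ ≤ ∑ i, ((v i - u i) + Cb * (c.f (v i) - c.f (u i))) := by
        apply Finset.sum_le_sum
        intro i _
        exact c.psi_gm_diff (hmem i).1 (hmem i).2.1 (hmem i).2.2 Cb hCble
    _ = (∑ i, (v i - u i)) + Cb * ∑ i, (c.f (v i) - c.f (u i)) := by
        rw [Finset.sum_add_distrib, Finset.mul_sum]
    _ ≤ ε/2 + Cb * (ε/(2*Cb)) := by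
        have h1 : ∑ i, (v i - u i) ≤ ε/2 := hsum.trans (min_le_right _ _)
        have h2 : ∑ i, (c.f (v i) - c.f (u i)) ≤ ε/(2*Cb) := by
          refine le_trans ?_ hφ
          apply Finset.sum_le_sum
          intro i _
          exact le_abs_self _
        have h3 : Cb * ∑ i, (c.f (v i) - c.f (u i)) ≤ Cb * (ε/(2*Cb)) :=
          mul_le_mul_of_nonneg_left h2 hCbpos.le
        linarith
    _ = ε := by field_simp; ring

lemma clamp_eq_self {u v t : ℝ} (h1 : u ≤ t) (h2 : t ≤ v) : clamp u v t = t := by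
  rw [clamp, min_eq_right h2, max_eq_right h1]

lemma lm_sub (j : ℕ) (s t : ℝ) : c.lm j t - c.lm j s = (c.cc j)⁻¹ * (t - s) := by
  unfold lm; ring

lemma lm_affine (j : ℕ) (x : ℝ) : c.lm j (c.cc j * x + c.dd j) = x := by
  have h := (c.cc_pos j).ne'
  unfold lm; field_simp; ring

lemma lm_mem {j : ℕ} {y : ℝ} (hy : y ∈ Icc (c.BB j) (c.AA j)) :
    c.lm j y ∈ Icc (c.f (c.BB j)) (c.f (c.AA j)) := by
  constructor
  · rw [← c.lm_BB j]; exact (c.lm_mono j).monotone hy.1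
  · rw [← c.lm_AA j]; exact (c.lm_mono j).monotone hy.2

/-- even-piece term bound for the inverse map. -/
lemma gmi_term {u v : ℝ} {j : ℕ} (hj : j ≤ N) :
    c.Psi c.gmi (clamp u v (c.pp (2*j+1))) - c.Psi c.gmi (clamp u v (c.pp (2*j))) ≤
      c.g (clamp (c.f (c.BB j)) (c.f (c.AA j)) (c.lm j (clamp u v (c.pp (2*j+1))))) -
      c.g (clamp (c.f (c.BB j)) (c.f (c.AA j)) (c.lm j (clamp u v (c.pp (2*j))))) := by
  rcases c.term_cases (u := u) (v := v) (2*j) with h | ⟨hm1, hm2⟩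
  · rw [← h]
    simp
  · rw [c.pp_even j, c.pp_odd j] at hm1 hm2 ⊢
    rw [c.psi_gap c.gmi_good hj hm1, c.psi_gap c.gmi_good hj hm2, gmi, gmi,
      clamp_eq_self (c.lm_mem hm1).1 (c.lm_mem hm1).2,
      clamp_eq_self (c.lm_mem hm2).1 (c.lm_mem hm2).2]

/-- odd-piece term bound for the inverse map. -/
lemma gmi_term_odd {u v : ℝ} {j : ℕ} (hj : j < N) :
    c.Psi c.gmi (clamp u v (c.pp (2*j+2))) - c.Psi c.gmi (clamp u v (c.pp (2*j+1))) ≤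
      clamp u v (c.pp (2*j+2)) - clamp u v (c.pp (2*j+1)) := by
  rcases c.term_cases (u := u) (v := v) (2*j+1) with h | ⟨hm1, hm2⟩
  · rw [← h]
    simp
  · have hk : 2*j+1 < 2*N+1 := by omega
    rw [c.psi_pm c.gmi_good hk hm1, c.psi_pm c.gmi_good hk hm2,
      pm, if_neg (by omega : ¬ (2*j+1) % 2 = 0), pm, if_neg (by omega : ¬ (2*j+1) % 2 = 0)]

/-- the inverse glued map is absolutely continuous. -/
lemma AC_psi_gmi (hACg : ACOn c.g 0 1) : ACOn (c.Psi c.gmi) 0 1 := by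
  intro ε hε
  set Ci : ℝ := 1 + ∑ j ∈ Finset.range (N+1), (c.cc j)⁻¹ with hCidef
  have hinn : ∀ j ∈ Finset.range (N+1), (0:ℝ) ≤ (c.cc j)⁻¹ :=
    fun j _ => (inv_pos.2 (c.cc_pos j)).le
  have hsumnn : (0:ℝ) ≤ ∑ j ∈ Finset.range (N+1), (c.cc j)⁻¹ := Finset.sum_nonneg hinn
  have hCipos : 0 < Ci := by rw [hCidef]; linarith
  have hCile : ∀ j, j ≤ N → (c.cc j)⁻¹ ≤ Ci := by
    intro j hj
    have h1 : (c.cc j)⁻¹ ≤ ∑ j' ∈ Finset.range (N+1), (c.cc j')⁻¹ :=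
      Finset.single_le_sum hinn (Finset.mem_range.2 (by omega))
    rw [hCidef]; linarith
  obtain ⟨δ₂, hδ₂, H2⟩ := hACg (ε/2) (by positivity)
  refine ⟨min (δ₂/Ci) (ε/2), lt_min (by positivity) (by positivity), ?_⟩
  intro n u v hmem hdisj hsum
  set w : Fin n → ℕ → ℝ := fun i k => clamp (u i) (v i) (c.pp k) with hwdef
  set al : Fin n → ℕ → ℝ :=
    fun i j => clamp (c.f (c.BB j)) (c.f (c.AA j)) (c.lm j (w i (2*j))) with haldef
  set be : Fin n → ℕ → ℝ :=
    fun i j => clamp (c.f (c.BB j)) (c.f (c.AA j)) (c.lm j (w i (2*j+1))) with hbedef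
  have hw_le : ∀ (i : Fin n) {k k' : ℕ}, k ≤ k' → w i k ≤ w i k' :=
    fun i k k' h => clamp_mono (u i) (v i) (c.pp_mono h)
  have hw_u : ∀ (i : Fin n) (k : ℕ), u i ≤ w i k := fun i k => le_max_left _ _
  have hw_v : ∀ (i : Fin n) (k : ℕ), w i k ≤ v i :=
    fun i k => max_le (hmem i).2.1 (min_le_left _ _)
  have hw0 : ∀ i, w i 0 = u i := fun i => c.clamp_first (hmem i).1 (hmem i).2.1
  have hwlast : ∀ i, w i (2*N+1) = v i := fun i => c.clamp_last (hmem i).2.1 (hmem i).2.2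
  have hal_le_be : ∀ (i : Fin n) (j : ℕ), al i j ≤ be i j :=
    fun i j => clamp_mono _ _ ((c.lm_mono j).monotone (hw_le i (by omega)))
  have hal0 : ∀ (i : Fin n) (j : ℕ), 0 ≤ al i j := by
    intro i j
    have h1 : c.f 0 ≤ c.f (c.BB j) := c.hmono.monotone (c.BB_nonneg j)
    rw [c.hf0] at h1
    exact h1.trans (le_max_left _ _)
  have hbe1 : ∀ (i : Fin n) (j : ℕ), be i j ≤ 1 := by
    intro i j
    have h1 : c.f (c.AA j) ≤ c.f 1 := c.hmono.monotone (c.AA_le_one j)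
    rw [c.hf1] at h1
    exact max_le ((c.hmono.monotone (c.BB_le_AA j)).trans h1) ((min_le_left _ _).trans h1)
  have hlen : ∀ (i : Fin n) (j : ℕ), be i j - al i j ≤ (c.cc j)⁻¹ * (w i (2*j+1) - w i (2*j)) := by
    intro i j
    have h1 : c.lm j (w i (2*j)) ≤ c.lm j (w i (2*j+1)) :=
      (c.lm_mono j).monotone (hw_le i (by omega))
    calc be i j - al i j ≤ c.lm j (w i (2*j+1)) - c.lm j (w i (2*j)) := clamp_contract _ _ h1
      _ = (c.cc j)⁻¹ * (w i (2*j+1) - w i (2*j)) := c.lm_sub j _ _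
  -- key membership fact for disjointness
  have hkey : ∀ (i : Fin n) (j : ℕ), j ≤ N → ∀ x ∈ Ioo (al i j) (be i j),
      (c.cc j * x + c.dd j ∈ Ioo (u i) (v i)) ∧ x ∈ Ioo (c.f (c.BB j)) (c.f (c.AA j)) := by
    intro i j hj x hx
    rcases c.term_cases (u := u i) (v := v i) (2*j) with h | ⟨hm1, hm2⟩
    · exfalso
      have h' : w i (2*j) = w i (2*j+1) := h
      have hab : al i j = be i j := by simp only [haldef, hbedef, h']
      rw [hab] at hx
      exact lt_irrefl _ (hx.1.trans hx.2)
    · have hm1' : w i (2*j) ∈ Icc (c.BB j) (c.AA j) := by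
        rw [← c.pp_even j, ← c.pp_odd j]; exact hm1
      have hm2' : w i (2*j+1) ∈ Icc (c.BB j) (c.AA j) := by
        rw [← c.pp_even j, ← c.pp_odd j]; exact hm2
      have hale : al i j = c.lm j (w i (2*j)) :=
        clamp_eq_self (c.lm_mem hm1').1 (c.lm_mem hm1').2
      have hbee : be i j = c.lm j (w i (2*j+1)) :=
        clamp_eq_self (c.lm_mem hm2').1 (c.lm_mem hm2').2
      have hx1 : c.lm j (w i (2*j)) < c.lm j (c.cc j * x + c.dd j) := by
        rw [c.lm_affine]; rw [hale] at hx; exact hx.1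
      have hx2 : c.lm j (c.cc j * x + c.dd j) < c.lm j (w i (2*j+1)) := by
        rw [c.lm_affine]; rw [hbee] at hx; exact hx.2
      have hx1' := (c.lm_mono j).lt_iff_lt.1 hx1
      have hx2' := (c.lm_mono j).lt_iff_lt.1 hx2
      refine ⟨⟨lt_of_le_of_lt (hw_u i (2*j)) hx1', lt_of_lt_of_le hx2' (hw_v i (2*j+1))⟩, ?_, ?_⟩
      · calc c.f (c.BB j) ≤ al i j := le_max_left _ _
          _ < x := hx.1
      · calc x < be i j := hx.2
          _ ≤ c.f (c.AA j) := max_le (c.hmono.monotone (c.BB_le_AA j)) (min_le_left _ _)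
  -- flattened family
  set M : ℕ := n * (N+1) with hM
  set e : Fin M ≃ Fin n × Fin (N+1) := finProdFinEquiv.symm with he
  set uu : Fin M → ℝ := fun q => al (e q).1 ((e q).2 : ℕ) with huu
  set vv : Fin M → ℝ := fun q => be (e q).1 ((e q).2 : ℕ) with hvv
  have hmem' : ∀ q, 0 ≤ uu q ∧ uu q ≤ vv q ∧ vv q ≤ 1 :=
    fun q => ⟨hal0 _ _, hal_le_be _ _, hbe1 _ _⟩
  have hdisj' : ∀ q q', q ≠ q' → Disjoint (Ioo (uu q) (vv q)) (Ioo (uu q') (vv q')) := by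
    intro q q' hne
    rw [Set.disjoint_left]
    intro x hx hx'
    have hjle : ((e q).2 : ℕ) ≤ N := Nat.lt_succ_iff.1 (e q).2.2
    have hjle' : ((e q').2 : ℕ) ≤ N := Nat.lt_succ_iff.1 (e q').2.2
    obtain ⟨hio, hff⟩ := hkey (e q).1 _ hjle x hx
    obtain ⟨hio', hff'⟩ := hkey (e q').1 _ hjle' x hx'
    by_cases hjj : ((e q).2 : ℕ) = ((e q').2 : ℕ)
    · have hii : (e q).1 ≠ (e q').1 := by
        intro hii
        exact hne (e.injective (Prod.ext hii (Fin.ext hjj)))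
      rw [hjj] at hio
      exact Set.disjoint_left.1 (hdisj _ _ hii) hio hio'
    · rcases Nat.lt_or_ge ((e q).2 : ℕ) ((e q').2 : ℕ) with hlt | hge
      · have h3 : c.AA ((e q).2 : ℕ) ≤ c.BB ((e q').2 : ℕ) :=
          (c.AA_le_BB _).trans (c.BB_mono hlt)
        have h4 := c.hmono.monotone h3
        linarith [hff.2, hff'.1]
      · have hlt' : ((e q').2 : ℕ) < ((e q).2 : ℕ) := lt_of_le_of_ne hge (Ne.symm hjj)
        have h3 : c.AA ((e q').2 : ℕ) ≤ c.BB ((e q).2 : ℕ) :=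
          (c.AA_le_BB _).trans (c.BB_mono hlt')
        have h4 := c.hmono.monotone h3
        linarith [hff.1, hff'.2]
  have hlen' : ∑ q, (vv q - uu q) ≤ δ₂ := by
    have h1 : ∑ q, (vv q - uu q) =
        ∑ p : Fin n × Fin (N+1), (be p.1 (p.2 : ℕ) - al p.1 (p.2 : ℕ)) :=
      Equiv.sum_comp e (fun p => be p.1 (p.2 : ℕ) - al p.1 (p.2 : ℕ))
    rw [h1, Fintype.sum_prod_type]
    have h2 : ∀ i : Fin n, ∑ j : Fin (N+1), (be i (j : ℕ) - al i (j : ℕ)) ≤ Ci * (v i - u i) := by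
      intro i
      have h3 : ∑ j : Fin (N+1), (be i (j : ℕ) - al i (j : ℕ)) ≤
          ∑ j : Fin (N+1), Ci * (w i (2*(j:ℕ)+1) - w i (2*(j:ℕ))) := by
        apply Finset.sum_le_sum
        intro j _
        have hj : (j : ℕ) ≤ N := Nat.lt_succ_iff.1 j.2
        have hwd : 0 ≤ w i (2*(j:ℕ)+1) - w i (2*(j:ℕ)) := by
          linarith [hw_le i (show 2*(j:ℕ) ≤ 2*(j:ℕ)+1 by omega)]
        calc be i (j:ℕ) - al i (j:ℕ) ≤ (c.cc (j:ℕ))⁻¹ * (w i (2*(j:ℕ)+1) - w i (2*(j:ℕ))) :=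
              hlen i (j:ℕ)
          _ ≤ Ci * (w i (2*(j:ℕ)+1) - w i (2*(j:ℕ))) :=
              mul_le_mul_of_nonneg_right (hCile _ hj) hwd
      have h4 : ∑ j : Fin (N+1), (w i (2*(j:ℕ)+1) - w i (2*(j:ℕ))) ≤ v i - u i := by
        have h5 : ∑ j : Fin (N+1), (w i (2*(j:ℕ)+1) - w i (2*(j:ℕ))) =
            ∑ j ∈ Finset.range (N+1), (w i (2*j+1) - w i (2*j)) :=
          Fin.sum_univ_eq_sum_range (fun j => w i (2*j+1) - w i (2*j)) (N+1)
        have h6 := sum_split N (fun k => w i (k+1) - w i k)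
        have h7 : ∑ k ∈ Finset.range (2*N+1), (w i (k+1) - w i k) = v i - u i := by
          rw [Finset.sum_range_sub (fun k => w i k), hw0, hwlast]
        have h8 : (0:ℝ) ≤ ∑ j ∈ Finset.range N, (w i (2*j+1+1) - w i (2*j+1)) :=
          Finset.sum_nonneg (fun j _ => by linarith [hw_le i (show 2*j+1 ≤ 2*j+1+1 by omega)])
        rw [h5]
        have h9 : ∀ j, w i (2*j+1) - w i (2*j) = (fun k => w i (k+1) - w i k) (2*j) := fun j => rfl
        calc ∑ j ∈ Finset.range (N+1), (w i (2*j+1) - w i (2*j))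
            = ∑ j ∈ Finset.range (N+1), (fun k => w i (k+1) - w i k) (2*j) := rfl
          _ ≤ v i - u i := by rw [← h7, h6]; linarith
      calc ∑ j : Fin (N+1), (be i (j : ℕ) - al i (j : ℕ))
          ≤ ∑ j : Fin (N+1), Ci * (w i (2*(j:ℕ)+1) - w i (2*(j:ℕ))) := h3
        _ = Ci * ∑ j : Fin (N+1), (w i (2*(j:ℕ)+1) - w i (2*(j:ℕ))) := by rw [Finset.mul_sum]
        _ ≤ Ci * (v i - u i) := mul_le_mul_of_nonneg_left h4 hCipos.le
    calc ∑ i : Fin n, ∑ j : Fin (N+1), (be i (j : ℕ) - al i (j : ℕ))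
        ≤ ∑ i : Fin n, Ci * (v i - u i) := Finset.sum_le_sum (fun i _ => h2 i)
      _ = Ci * ∑ i : Fin n, (v i - u i) := by rw [Finset.mul_sum]
      _ ≤ Ci * (δ₂/Ci) := by
          apply mul_le_mul_of_nonneg_left _ hCipos.le
          exact hsum.trans (min_le_left _ _)
      _ = δ₂ := by field_simp
  have hH2 := H2 M uu vv hmem' hdisj' hlen'
  -- final chain
  have hmono := (c.psi_strictMono c.gmi_good).monotone
  have hgsum : ∑ i : Fin n, ∑ j ∈ Finset.range (N+1),
      (c.g (be i j) - c.g (al i j)) ≤ ε/2 := by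
    refine le_trans ?_ hH2
    have h1 : ∑ q, |c.g (vv q) - c.g (uu q)| =
        ∑ p : Fin n × Fin (N+1), |c.g (be p.1 (p.2 : ℕ)) - c.g (al p.1 (p.2 : ℕ))| :=
      Equiv.sum_comp e (fun p => |c.g (be p.1 (p.2 : ℕ)) - c.g (al p.1 (p.2 : ℕ))|)
    rw [h1, Fintype.sum_prod_type]
    apply Finset.sum_le_sum
    intro i _
    have h2 : ∑ j : Fin (N+1), |c.g (be i (j:ℕ)) - c.g (al i (j:ℕ))| =
        ∑ j ∈ Finset.range (N+1), |c.g (be i j) - c.g (al i j)| :=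
      Fin.sum_univ_eq_sum_range (fun j => |c.g (be i j) - c.g (al i j)|) (N+1)
    rw [h2]
    apply Finset.sum_le_sum
    intro j _
    exact le_abs_self _
  calc ∑ i : Fin n, |c.Psi c.gmi (v i) - c.Psi c.gmi (u i)|
      = ∑ i : Fin n, (c.Psi c.gmi (v i) - c.Psi c.gmi (u i)) := by
        apply Finset.sum_congr rfl
        intro i _
        exact abs_of_nonneg (sub_nonneg.2 (hmono (hmem i).2.1))
    _ ≤ ∑ i : Fin n, ((∑ j ∈ Finset.range (N+1), (c.g (be i j) - c.g (al i j))) + (v i - u i)) := by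
        apply Finset.sum_le_sum
        intro i _
        have htele : c.Psi c.gmi (v i) - c.Psi c.gmi (u i) =
            ∑ k ∈ Finset.range (2*N+1),
              (c.Psi c.gmi (w i (k+1)) - c.Psi c.gmi (w i k)) := by
          rw [Finset.sum_range_sub (fun k => c.Psi c.gmi (w i k)), hw0, hwlast]
        rw [htele, sum_split N (fun k => c.Psi c.gmi (w i (k+1)) - c.Psi c.gmi (w i k))]
        have heven : ∑ j ∈ Finset.range (N+1),
            (c.Psi c.gmi (w i (2*j+1)) - c.Psi c.gmi (w i (2*j))) ≤
            ∑ j ∈ Finset.range (N+1), (c.g (be i j) - c.g (al i j)) := by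
          apply Finset.sum_le_sum
          intro j hj
          exact c.gmi_term (Nat.lt_succ_iff.1 (Finset.mem_range.1 hj))
        have hodd : ∑ j ∈ Finset.range N,
            (c.Psi c.gmi (w i (2*j+1+1)) - c.Psi c.gmi (w i (2*j+1))) ≤ v i - u i := by
          have h1 : ∑ j ∈ Finset.range N,
              (c.Psi c.gmi (w i (2*j+1+1)) - c.Psi c.gmi (w i (2*j+1))) ≤
              ∑ j ∈ Finset.range N, (w i (2*j+2) - w i (2*j+1)) := by
            apply Finset.sum_le_sum
            intro j hj
            exact c.gmi_term_odd (Finset.mem_range.1 hj)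
          have h7 : ∑ k ∈ Finset.range (2*N+1), (w i (k+1) - w i k) = v i - u i := by
            rw [Finset.sum_range_sub (fun k => w i k), hw0, hwlast]
          have h6 := sum_split N (fun k => w i (k+1) - w i k)
          have h8 : (0:ℝ) ≤ ∑ j ∈ Finset.range (N+1), (w i (2*j+1) - w i (2*j)) :=
            Finset.sum_nonneg (fun j _ => by linarith [hw_le i (show 2*j ≤ 2*j+1 by omega)])
          have h9 : ∑ j ∈ Finset.range N, (w i (2*j+2) - w i (2*j+1)) ≤ v i - u i := by
            rw [← h7, h6]
            have : ∀ j, w i (2*j+2) - w i (2*j+1) = w i (2*j+1+1) - w i (2*j+1) := fun j => rfl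
            linarith
          exact h1.trans h9
        linarith
    _ = (∑ i : Fin n, ∑ j ∈ Finset.range (N+1), (c.g (be i j) - c.g (al i j))) +
        ∑ i : Fin n, (v i - u i) := Finset.sum_add_distrib
    _ ≤ ε/2 + ε/2 := by
        have := hsum.trans (min_le_right _ _)
        linarith [hgsum]
    _ = ε := by ring

end Cfg

/-- Lebesgue's theorem for monotone functions: an a.e. derivative exists which is
nonnegative, locally integrable, and whose integral over an interval is at most the
increment of the function. -/
lemma mono_exists_D {f : ℝ → ℝ} (hf : Monotone f) :
    ∃ D : ℝ → ℝ, Measurable D ∧ (∀ x, 0 ≤ D x) ∧ (∀ᵐ x, HasDerivAt f (D x) x) ∧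
      (∀ u v : ℝ, IntegrableOn D (Ioo u v)) ∧
      ∀ u v : ℝ, u ≤ v → ∫ x in Ioo u v, D x ≤ f v - f u := by
  classical
  set μ := hf.stieltjesFunction.measure with hμdef
  have hfin : ∀ u v : ℝ, μ (Ioo u v) ≠ ⊤ := by
    intro u v
    rw [hμdef, StieltjesFunction.measure_Ioo]
    exact ENNReal.ofReal_ne_top
  refine ⟨fun x => (μ.rnDeriv volume x).toReal,
    (Measure.measurable_rnDeriv μ volume).ennreal_toReal,
    fun x => ENNReal.toReal_nonneg, hf.ae_hasDerivAt, 
    fun u v => Measure.integrableOn_toReal_rnDeriv (hfin u v), ?_⟩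
  intro u v huv
  rcases eq_or_lt_of_le huv with rfl | hlt
  · simp
  have hle := Measure.setIntegral_toReal_rnDeriv_le (ν := volume) (hfin u v)
  refine hle.trans ?_
  rw [hμdef, measureReal_def, StieltjesFunction.measure_Ioo]
  set g := hf.stieltjesFunction with hg
  have hfuv : f u ≤ f v := hf huv
  have hgu : f u ≤ g u := hf.le_rightLim le_rfl
  have hgv : Function.leftLim (⇑g) v ≤ f v := by
    refine le_of_tendsto (g.mono.tendsto_leftLim v) ?_
    refine eventually_nhdsWithin_of_forall ?_
    intro t ht
    exact hf.rightLim_le ht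
  have h0 : Function.leftLim (⇑g) v - g u ≤ f v - f u := by linarith
  rcases le_total (Function.leftLim (⇑g) v - g u) 0 with h | h
  · rw [ENNReal.ofReal_eq_zero.2 h]
    simp only [ENNReal.toReal_zero]
    linarith
  · rw [ENNReal.toReal_ofReal h]
    exact h0

namespace Cfg

/-- the main integral estimate. -/
lemma rho_bound :
    ∫ x in Ioo (0:ℝ) 1, |deriv c.f x - deriv (c.Psi c.gm) x| ≤
      (∑ j ∈ Finset.range (N+1), (|c.AA j - c.f (c.AA j)| + |c.f (c.BB j) - c.BB j|)) +
      ∑ i ∈ Finset.range N, ((c.f (c.BB (i+1)) - c.f (c.AA i)) + (c.BB (i+1) - c.AA i)) := by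
  obtain ⟨Dp, hDpm, hDp0, hDpd, hDpi, hDpb⟩ := mono_exists_D c.hmono.monotone
  obtain ⟨Dq, hDqm, hDq0, hDqd, hDqi, hDqb⟩ :=
    mono_exists_D (c.psi_strictMono c.gm_good).monotone
  have hae1 : ∀ᵐ x, deriv c.f x = Dp x := hDpd.mono (fun x hx => hx.deriv)
  have hae2 : ∀ᵐ x, deriv (c.Psi c.gm) x = Dq x := hDqd.mono (fun x hx => hx.deriv)
  have habs : ∀ s t : ℝ, IntegrableOn (fun x => |Dp x - Dq x|) (Ioo s t) :=
    fun s t => ((hDpi s t).sub (hDqi s t)).abs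
  have h1 : ∫ x in Ioo (0:ℝ) 1, |deriv c.f x - deriv (c.Psi c.gm) x| =
      ∫ x in Ioo (0:ℝ) 1, |Dp x - Dq x| := by
    apply integral_congr_ae
    filter_upwards [ae_restrict_of_ae hae1, ae_restrict_of_ae hae2] with x e1 e2
    rw [e1, e2]
  rw [h1]
  -- decompose (0,1) into the pieces
  have hsub1 : ∀ k ∈ Finset.range (2*N+1), Ioo (c.pp k) (c.pp (k+1)) ⊆ Ioo (0:ℝ) 1 :=
    fun k _ => Ioo_subset_Ioo (c.pp_nonneg k) (c.pp_le_one (k+1))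
  have hae_union : Ioo (0:ℝ) 1 =ᵐ[volume]
      ⋃ k ∈ Finset.range (2*N+1), Ioo (c.pp k) (c.pp (k+1)) := by
    rw [MeasureTheory.ae_eq_set]
    constructor
    · have hsing : volume (⋃ k ∈ Finset.range (2*N+2), {c.pp k}) = 0 := by
        refine (measure_biUnion_null_iff (Finset.range (2*N+2)).countable_toSet).2 ?_
        intro k _
        exact measure_singleton _
      refine measure_mono_null ?_ hsing
      intro x hx
      obtain ⟨hx01, hxU⟩ := hx
      obtain ⟨k, hk, hk1, hk2, -⟩ := c.cover (Ioo_subset_Icc_self hx01)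
      rcases eq_or_lt_of_le hk1 with heq | hlt1
      · exact Set.mem_iUnion₂.2 ⟨k, Finset.mem_range.2 (by omega), heq.symm⟩
      rcases eq_or_lt_of_le hk2 with heq | hlt2
      · exact Set.mem_iUnion₂.2 ⟨k+1, Finset.mem_range.2 (by omega), heq⟩
      exact (hxU (Set.mem_iUnion₂.2 ⟨k, Finset.mem_range.2 (by omega), ⟨hlt1, hlt2⟩⟩)).elim
    · have : (⋃ k ∈ Finset.range (2*N+1), Ioo (c.pp k) (c.pp (k+1))) \ Ioo (0:ℝ) 1 = ∅ := by
        rw [diff_eq_empty]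
        exact iUnion₂_subset hsub1
      rw [this]
      simp
  rw [setIntegral_congr_set hae_union,
    integral_biUnion_finset (Finset.range (2*N+1)) (fun k _ => measurableSet_Ioo)
      (by
        intro k hk l hl hkl
        wlog h : k < l generalizing k l
        · exact (this hl hk (Ne.symm hkl) (by
            rcases Nat.lt_or_ge l k with h' | h'
            · exact h'
            · exact absurd (lt_of_le_of_ne h' hkl) h)).symm
        refine Set.disjoint_left.2 (fun x hx hx' => ?_)
        have hle : c.pp (k+1) ≤ c.pp l := c.pp_mono h
        exact absurd (hx.2.trans_le hle) (not_lt.2 hx'.1.le))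
      (fun k _ => habs _ _)]
  -- bound each piece
  have hbound : ∀ k ∈ Finset.range (2*N+1),
      ∫ x in Ioo (c.pp k) (c.pp (k+1)), |Dp x - Dq x| ≤
        (if k % 2 = 0 then |c.AA (k/2) - c.f (c.AA (k/2))| + |c.f (c.BB (k/2)) - c.BB (k/2)|
         else (c.f (c.BB (k/2+1)) - c.f (c.AA (k/2))) + (c.BB (k/2+1) - c.AA (k/2))) := by
    intro k hk
    rw [Finset.mem_range] at hk
    rcases Nat.even_or_odd k with ⟨j, hj⟩ | ⟨j, hj⟩
    -- even piece : gap j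
    · have hk2 : k = 2*j := by omega
      subst hk2
      have hjN : j ≤ N := by omega
      rw [if_pos (by omega : (2*j) % 2 = 0), (by omega : (2*j)/2 = j)]
      have hpk : c.pp (2*j) = c.BB j := c.pp_even j
      have hpk1 : c.pp (2*j+1) = c.AA j := c.pp_odd j
      rw [hpk, hpk1]
      by_cases hdeg : c.AA j ≤ c.BB j
      · rw [Ioo_eq_empty (not_lt.2 hdeg)]
        simp only [Measure.restrict_empty, integral_zero_measure]
        positivity
      push_neg at hdeg
      have hDqc : ∀ᵐ x ∂volume.restrict (Ioo (c.BB j) (c.AA j)),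
          Dq x = c.cc j * Dp x := by
        filter_upwards [ae_restrict_of_ae hae2, ae_restrict_of_ae hDpd,
          ae_restrict_mem measurableSet_Ioo] with x h2 hd hxm
        have hnb : Icc (c.BB j) (c.AA j) ∈ nhds x :=
          Filter.mem_of_superset (Ioo_mem_nhds hxm.1 hxm.2) Ioo_subset_Icc_self
        have hev : c.Psi c.gm =ᶠ[nhds x] (fun y => c.cc j * c.f y + c.dd j) := by
          filter_upwards [hnb] with y hy
          exact c.psi_gap c.gm_good hjN hy
        have hda : HasDerivAt (fun y => c.cc j * c.f y + c.dd j) (c.cc j * Dp x) x :=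
          (hd.const_mul _).add_const _
        rw [← h2, hev.deriv_eq, hda.deriv]
      have hstep : ∫ x in Ioo (c.BB j) (c.AA j), |Dp x - Dq x| =
          ∫ x in Ioo (c.BB j) (c.AA j), |1 - c.cc j| * Dp x := by
        apply integral_congr_ae
        filter_upwards [hDqc] with x hx
        rw [hx, show Dp x - c.cc j * Dp x = (1 - c.cc j) * Dp x by ring, abs_mul,
          abs_of_nonneg (hDp0 x)]
      rw [hstep, integral_const_mul]
      have hIb : ∫ x in Ioo (c.BB j) (c.AA j), Dp x ≤ c.f (c.AA j) - c.f (c.BB j) :=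
        hDpb _ _ hdeg.le
      have hfd : (0:ℝ) ≤ c.f (c.AA j) - c.f (c.BB j) := by
        have := c.hmono.monotone (c.BB_le_AA j); linarith
      calc |1 - c.cc j| * ∫ x in Ioo (c.BB j) (c.AA j), Dp x
          ≤ |1 - c.cc j| * (c.f (c.AA j) - c.f (c.BB j)) :=
            mul_le_mul_of_nonneg_left hIb (abs_nonneg _)
        _ = |(1 - c.cc j) * (c.f (c.AA j) - c.f (c.BB j))| := by
            rw [abs_mul, abs_of_nonneg hfd]
        _ = |(c.f (c.AA j) - c.AA j) - (c.f (c.BB j) - c.BB j)| := by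
            rw [sub_mul, one_mul, c.cc_spec j]
            ring_nf
        _ ≤ |c.f (c.AA j) - c.AA j| + |c.f (c.BB j) - c.BB j| := abs_sub _ _
        _ = |c.AA j - c.f (c.AA j)| + |c.f (c.BB j) - c.BB j| := by
            rw [abs_sub_comm (c.f (c.AA j)) (c.AA j)]
    -- odd piece : fixed interval j
    · have hk2 : k = 2*j+1 := by omega
      subst hk2
      have hjN : j < N := by omega
      rw [if_neg (by omega : ¬ (2*j+1) % 2 = 0), (by omega : (2*j+1)/2 = j)]
      have hpk : c.pp (2*j+1) = c.AA j := c.pp_odd j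
      have hpk1 : c.pp (2*j+1+1) = c.BB (j+1) := by
        rw [(by ring : 2*j+1+1 = 2*(j+1)), c.pp_even]
      rw [hpk, hpk1]
      have hDq1 : ∀ᵐ x ∂volume.restrict (Ioo (c.AA j) (c.BB (j+1))), Dq x = 1 := by
        filter_upwards [ae_restrict_of_ae hae2, ae_restrict_mem measurableSet_Ioo]
          with x h2 hxm
        have hnb : Icc (c.AA j) (c.BB (j+1)) ∈ nhds x :=
          Filter.mem_of_superset (Ioo_mem_nhds hxm.1 hxm.2) Ioo_subset_Icc_self
        have hev : c.Psi c.gm =ᶠ[nhds x] id := by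
          filter_upwards [hnb] with y hy
          refine c.psi_fixed (⟨j, hjN⟩ : Fin N) ?_
          rwa [c.AA_pos hjN, c.BB_pos hjN] at hy
        rw [← h2, hev.deriv_eq, deriv_id]
      have hconst : IntegrableOn (fun _ : ℝ => (1:ℝ)) (Ioo (c.AA j) (c.BB (j+1))) := by
        refine integrableOn_const ?_
        rw [Real.volume_Ioo]
        exact ENNReal.ofReal_ne_top
      have hstep : ∫ x in Ioo (c.AA j) (c.BB (j+1)), |Dp x - Dq x| =
          ∫ x in Ioo (c.AA j) (c.BB (j+1)), |Dp x - 1| := by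
        apply integral_congr_ae
        filter_upwards [hDq1] with x hx
        rw [hx]
      have hstep2 : ∫ x in Ioo (c.AA j) (c.BB (j+1)), |Dp x - 1| ≤
          ∫ x in Ioo (c.AA j) (c.BB (j+1)), (Dp x + 1) := by
        refine integral_mono_ae ((hDpi _ _).sub hconst).abs ((hDpi _ _).add hconst) ?_
        refine ae_of_all _ (fun x => ?_)
        have h0 := hDp0 x
        have hb : |Dp x - 1| ≤ Dp x + 1 := by
          rw [abs_le]; exact ⟨by linarith, by linarith⟩
        simpa using hb
      rw [hstep]
      refine hstep2.trans ?_
      have hABle : c.AA j ≤ c.BB (j+1) := c.AA_le_BB j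
      rw [integral_add (hDpi _ _) hconst, setIntegral_const, measureReal_def, Real.volume_Ioo, smul_eq_mul,
        mul_one, ENNReal.toReal_ofReal (by linarith : (0:ℝ) ≤ c.BB (j+1) - c.AA j)]
      have h3 := hDpb (c.AA j) (c.BB (j+1)) hABle
      linarith
  refine le_trans (Finset.sum_le_sum hbound) (le_of_eq ?_)
  rw [sum_split N (fun k =>
    if k % 2 = 0 then |c.AA (k/2) - c.f (c.AA (k/2))| + |c.f (c.BB (k/2)) - c.BB (k/2)|
    else (c.f (c.BB (k/2+1)) - c.f (c.AA (k/2))) + (c.BB (k/2+1) - c.AA (k/2)))]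
  congr 1
  · refine Finset.sum_congr rfl (fun j _ => ?_)
    rw [if_pos (by omega : (2*j) % 2 = 0), (by omega : (2*j)/2 = j)]
  · refine Finset.sum_congr rfl (fun j _ => ?_)
    rw [if_neg (by omega : ¬ (2*j+1) % 2 = 0), (by omega : (2*j+1)/2 = j)]

/-- the integral estimate, restated over `Fin N`. -/
lemma rho_bound_fin :
    ∫ x in Ioo (0:ℝ) 1, |deriv c.f x - deriv (c.Psi c.gm) x| ≤
      ∑ i : Fin N, (|c.a i - c.f (c.a i)| + |c.f (c.b i) - c.b i| + (c.b i - c.a i) +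
        (c.f (c.b i) - c.f (c.a i))) := by
  refine c.rho_bound.trans (le_of_eq ?_)
  have hS1 : ∑ j ∈ Finset.range (N+1), (|c.AA j - c.f (c.AA j)| + |c.f (c.BB j) - c.BB j|)
      = (∑ j ∈ Finset.range N, |c.AA j - c.f (c.AA j)|)
        + ∑ j ∈ Finset.range N, |c.f (c.BB (j+1)) - c.BB (j+1)| := by
    rw [Finset.sum_add_distrib, Finset.sum_range_succ, Finset.sum_range_succ'
      (fun j => |c.f (c.BB j) - c.BB j|)]
    rw [c.AA_last, c.BB_zero, c.hf1, c.hf0]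
    simp
  have hR : ∑ i : Fin N, (|c.a i - c.f (c.a i)| + |c.f (c.b i) - c.b i| + (c.b i - c.a i) +
        (c.f (c.b i) - c.f (c.a i))) =
      ∑ j ∈ Finset.range N, (|c.AA j - c.f (c.AA j)| + |c.f (c.BB (j+1)) - c.BB (j+1)| +
        (c.BB (j+1) - c.AA j) + (c.f (c.BB (j+1)) - c.f (c.AA j))) := by
    rw [← Fin.sum_univ_eq_sum_range (fun j => |c.AA j - c.f (c.AA j)| +
      |c.f (c.BB (j+1)) - c.BB (j+1)| + (c.BB (j+1) - c.AA j) +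
      (c.f (c.BB (j+1)) - c.f (c.AA j))) N]
    refine Finset.sum_congr rfl (fun i _ => ?_)
    have e1 : c.AA (i:ℕ) = c.a i := by rw [c.AA_pos i.2]
    have e2 : c.BB ((i:ℕ)+1) = c.b i := by rw [c.BB_pos i.2]
    rw [e1, e2]
  rw [hS1, hR, ← Finset.sum_add_distrib, ← Finset.sum_add_distrib]
  exact Finset.sum_congr rfl (fun j _ => by ring)

end Cfg

/-- endpoints are fixed, and an element of `Hplus` is globally strictly monotone. -/
lemma perm_ends (φ : Equiv.Perm ℝ) (hout : ∀ x, x ∉ Icc (0:ℝ) 1 → φ x = x)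
    (hmono : StrictMonoOn φ (Icc (0:ℝ) 1)) (hmaps : MapsTo φ (Icc (0:ℝ) 1) (Icc (0:ℝ) 1)) :
    ⇑φ 0 = 0 ∧ ⇑φ 1 = 1 ∧ StrictMono ⇑φ := by
  have h0 : (0:ℝ) ∈ Icc (0:ℝ) 1 := ⟨le_rfl, zero_le_one⟩
  have h1 : (1:ℝ) ∈ Icc (0:ℝ) 1 := ⟨zero_le_one, le_rfl⟩
  have hφ0 : ⇑φ 0 = 0 := by
    by_contra hne
    have ht : φ 0 ∈ Icc (0:ℝ) 1 := hmaps h0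
    have htpos : 0 < φ 0 := lt_of_le_of_ne ht.1 (Ne.symm hne)
    set w := φ.symm (φ 0 / 2) with hw
    have hfw : φ w = φ 0 / 2 := φ.apply_symm_apply _
    by_cases hwi : w ∈ Icc (0:ℝ) 1
    · rcases eq_or_lt_of_le hwi.1 with heq | hlt
      · have : φ 0 = φ 0 / 2 := by nth_rewrite 1 [heq]; exact hfw
        linarith
      · have := hmono h0 hwi hlt
        rw [hfw] at this
        linarith
    · have : w = φ 0 / 2 := by rw [← hfw, hout w hwi]
      refine hwi ?_
      rw [this]
      constructor <;> [linarith [ht.1]; linarith [ht.2]]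
  have hφ1 : ⇑φ 1 = 1 := by
    by_contra hne
    have ht : φ 1 ∈ Icc (0:ℝ) 1 := hmaps h1
    have htlt : φ 1 < 1 := lt_of_le_of_ne ht.2 hne
    set w := φ.symm ((φ 1 + 1) / 2) with hw
    have hfw : φ w = (φ 1 + 1) / 2 := φ.apply_symm_apply _
    by_cases hwi : w ∈ Icc (0:ℝ) 1
    · rcases eq_or_lt_of_le hwi.2 with heq | hlt
      · have : φ 1 = (φ 1 + 1) / 2 := by nth_rewrite 1 [← heq]; exact hfw
        linarith
      · have := hmono hwi h1 hlt
        rw [hfw] at this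
        linarith
    · have : w = (φ 1 + 1) / 2 := by rw [← hfw, hout w hwi]
      refine hwi ?_
      rw [this]
      constructor <;> [linarith [ht.1]; linarith [ht.2]]
  refine ⟨hφ0, hφ1, ?_⟩
  intro y z hyz
  by_cases hy : y ∈ Icc (0:ℝ) 1 <;> by_cases hz : z ∈ Icc (0:ℝ) 1
  · exact hmono hy hz hyz
  · rw [hout z hz]
    have hz1 : 1 < z := by
      rcases not_and_or.1 hz with h | h <;> push_neg at h
      · linarith [hy.1]
      · exact h
    exact lt_of_le_of_lt (hmaps hy).2 hz1
  · rw [hout y hy]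
    have hy0 : y < 0 := by
      rcases not_and_or.1 hy with h | h <;> push_neg at h
      · exact h
      · linarith [hz.2]
    exact lt_of_lt_of_le hy0 (hmaps hz).1
  · rw [hout y hy, hout z hz]
    exact hyz

end BlowUp


/-- Fixed points of `φ ∈ H₊^AC([0,1])` can be blown up to fixed
intervals: given fixed points `x₀ < … < x_{N-1}` and pairwise disjoint closed
intervals `[aᵢ,bᵢ] ⊆ [0,1]` (in increasing order) with `xᵢ ∈ [aᵢ,bᵢ]`, there is
`ψ ∈ H₊^AC([0,1])` fixing each `[aᵢ,bᵢ]` pointwise with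
`ρ(φ,ψ) ≤ Σᵢ |aᵢ - φ(aᵢ)| + |φ(bᵢ) - bᵢ| + (bᵢ - aᵢ) + (φ(bᵢ) - φ(aᵢ))`. -/
theorem exists_fixing_approximation
    (φ : Equiv.Perm ℝ) (hφ : φ ∈ Hac 0 1) (N : ℕ) (x a b : Fin N → ℝ)
    (hx : StrictMono x)
    (hfix : ∀ i, x i ∈ Icc (0:ℝ) 1 ∧ φ (x i) = x i)
    (hmem : ∀ i, a i ≤ x i ∧ x i ≤ b i)
    (hsub : ∀ i, 0 ≤ a i ∧ b i ≤ 1)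
    (hord : ∀ i j, i < j → b i < a j) :
    ∃ ψ ∈ Hac 0 1, (∀ i, ∀ y ∈ Icc (a i) (b i), ψ y = y) ∧
      rho 0 1 φ ψ ≤
        ∑ i, (|a i - φ (a i)| + |φ (b i) - b i| + (b i - a i) + (φ (b i) - φ (a i))) := by
  simp only [Hac, Hplus, Set.mem_setOf_eq] at hφ
  obtain ⟨⟨hout, hmonoOn, hmaps, hcont⟩, hACf, hACg⟩ := hφ
  obtain ⟨hφ0, hφ1, hsm⟩ := BlowUp.perm_ends φ hout hmonoOn hmaps
  let c : BlowUp.Cfg N := ⟨a, b, ⇑φ, ⇑φ.symm, hsm,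
    (fun t => φ.symm_apply_apply t), (fun t => φ.apply_symm_apply t), hφ0, hφ1,
    (fun i => (hmem i).1.trans (hmem i).2), (fun i => (hsub i).1), (fun i => (hsub i).2),
    hord⟩
  have li : Function.LeftInverse (c.Psi c.gmi) (c.Psi c.gm) :=
    c.psi_comp c.gm_good (fun j t => c.gmi_gm j t)
  have ri : Function.RightInverse (c.Psi c.gmi) (c.Psi c.gm) :=
    c.psi_comp c.gmi_good (fun j t => c.gm_gmi j t)
  let ψ : Equiv.Perm ℝ := ⟨c.Psi c.gm, c.Psi c.gmi, li, ri⟩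
  have hsurj : Function.Surjective (c.Psi c.gm) := fun y => ⟨c.Psi c.gmi y, ri y⟩
  have hcontψ : Continuous (c.Psi c.gm) := by
    have h := (StrictMono.orderIsoOfSurjective _ (c.psi_strictMono c.gm_good)
      hsurj).continuous
    rwa [StrictMono.coe_orderIsoOfSurjective] at h
  refine ⟨ψ, ⟨⟨fun t ht => c.psi_out ht, ?_, fun y hy => c.psi_mem01 c.gm_good hy,
    hcontψ.continuousOn⟩, c.AC_psi_gm hACf, c.AC_psi_gmi hACg⟩,
    fun i y hy => c.psi_fixed i hy, ?_⟩
  · exact (c.psi_strictMono c.gm_good).strictMonoOn _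
  · have hrho : rho 0 1 φ ψ =
        ∫ t in Ioo (0:ℝ) 1, |deriv c.f t - deriv (c.Psi c.gm) t| := rfl
    rw [hrho]
    exact c.rho_bound_fin
end

section
/- The set { f ∈ H_+([0,1]) : Fix(f) is totally disconnected } is a G_δ subset of H_+([0,1]) with the topology of uniform convergence. -/
open MeasureTheory Set

/-- The supremum distance on `[0,1]`. -/
noncomputable def unifDist (f g : Equiv.Perm ℝ) : ℝ :=
  ⨆ x : Icc (0:ℝ) 1, |f x - g x|

/-- The topology of uniform convergence on `H₊([0,1])`. -/
noncomputable def unifTop : TopologicalSpace ↥(Hplus 0 1) :=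
  TopologicalSpace.generateFrom
    {U | ∃ f : ↥(Hplus 0 1), ∃ ε : ℝ, 0 < ε ∧
      U = {g : ↥(Hplus 0 1) | unifDist (f : Equiv.Perm ℝ) (g : Equiv.Perm ℝ) < ε}}

noncomputable instance : TopologicalSpace ↥(Hplus 0 1) := unifTop

/-! A subset of `ℝ` is totally disconnected iff it contains no interval `[p, q]` with rational
`p < q`, so the set in question is the intersection over such pairs of the sets of `f` moving
some point of `[p, q]`. Each of these is open in the uniform topology, because evaluation at a
point of `[0, 1]` is continuous. -/

theorem isTotallyDisconnected_iff_forall_rat_Icc_not_subset {s : Set ℝ} :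
    IsTotallyDisconnected s ↔ ∀ p q : ℚ, (p : ℝ) < q → ¬ Icc (p : ℝ) q ⊆ s := by
  rw [isTotallyDisconnected_iff_lt]
  constructor
  · intro h p q hpq hs
    obtain ⟨z, hzs, hz⟩ := h p (hs ⟨le_rfl, hpq.le⟩) q (hs ⟨hpq.le, le_rfl⟩) hpq
    exact hzs (hs (Ioo_subset_Icc_self hz))
  · intro h x _ y _ hxy
    obtain ⟨p, hxp, hpy⟩ := exists_rat_btwn hxy
    obtain ⟨q, hpq, hqy⟩ := exists_rat_btwn hpy
    obtain ⟨z, hz, hzs⟩ := not_subset.mp (h p q hpq)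
    exact ⟨z, hzs, hxp.trans_le hz.1, hz.2.trans_lt hqy⟩

theorem abs_sub_le_unifDist (f g : Hplus 0 1) {x : ℝ} (hx : x ∈ Icc (0 : ℝ) 1) :
    |(f : Equiv.Perm ℝ) x - (g : Equiv.Perm ℝ) x| ≤ unifDist f g := by
  have hbdd : BddAbove (range fun y : Icc (0 : ℝ) 1 =>
      |(f : Equiv.Perm ℝ) y - (g : Equiv.Perm ℝ) y|) := by
    refine ⟨1, forall_mem_range.mpr fun y => ?_⟩
    obtain ⟨hf₀, hf₁⟩ := f.2.2.2.1 y.2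
    obtain ⟨hg₀, hg₁⟩ := g.2.2.2.1 y.2
    exact abs_sub_le_iff.mpr ⟨by linarith, by linarith⟩
  exact le_ciSup hbdd (⟨x, hx⟩ : Icc (0 : ℝ) 1)

theorem isOpen_setOf_unifDist_lt (f : Hplus 0 1) {ε : ℝ} (hε : 0 < ε) :
    IsOpen {g : Hplus 0 1 | unifDist f g < ε} :=
  TopologicalSpace.GenerateOpen.basic _ ⟨f, ε, hε, rfl⟩

theorem unifDist_self (f : Equiv.Perm ℝ) : unifDist f f = 0 := by
  simp [unifDist]

theorem continuous_apply_of_mem_Icc {x : ℝ} (hx : x ∈ Icc (0 : ℝ) 1) :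
    Continuous fun f : Hplus 0 1 => (f : Equiv.Perm ℝ) x := by
  refine continuous_iff_continuousAt.mpr fun f => Metric.tendsto_nhds.mpr fun ε hε => ?_
  have hball : {g : Hplus 0 1 | unifDist f g < ε} ∈ nhds f :=
    (isOpen_setOf_unifDist_lt f hε).mem_nhds (by simpa [unifDist_self] using hε)
  filter_upwards [hball] with g hg
  rw [Real.dist_eq, abs_sub_comm]
  exact (abs_sub_le_unifDist f g hx).trans_lt hg

theorem isOpen_setOf_not_mem_fixSet (x : ℝ) :
    IsOpen {f : Hplus 0 1 | x ∉ fixSet f} := by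
  by_cases hx : x ∈ Icc (0 : ℝ) 1
  · have hset :
        {f : Hplus 0 1 | x ∉ fixSet f} = {f : Hplus 0 1 | (f : Equiv.Perm ℝ) x ≠ x} := by
      simp only [fixSet, mem_ofPred_eq, hx, true_and]
    rw [hset]
    exact isOpen_ne_fun (continuous_apply_of_mem_Icc hx) continuous_const
  · have hset : {f : Hplus 0 1 | x ∉ fixSet f} = univ :=
      eq_univ_of_forall fun _ hxf => hx hxf.1
    rw [hset]
    exact isOpen_univ

theorem isOpen_setOf_not_subset_fixSet (S : Set ℝ) :
    IsOpen {f : Hplus 0 1 | ¬ S ⊆ fixSet f} := by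
  have hset :
      {f : Hplus 0 1 | ¬ S ⊆ fixSet f} = ⋃ x ∈ S, {f : Hplus 0 1 | x ∉ fixSet f} := by
    ext f
    simp only [not_subset, mem_ofPred_eq, mem_iUnion, exists_prop]
  rw [hset]
  exact isOpen_biUnion fun x _ => isOpen_setOf_not_mem_fixSet x

/-- In `H₊([0,1])` with the topology of uniform convergence,
the set of homeomorphisms with totally disconnected fixed-point set is `G_δ`. -/
theorem totallyDisconnected_fixSet_Gδ_in_Hplus :
    IsGδ {f : ↥(Hplus 0 1) | IsTotallyDisconnected (fixSet (f : Equiv.Perm ℝ))} := by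
  simp only [isTotallyDisconnected_iff_forall_rat_Icc_not_subset, ofPred_forall]
  exact .iInter fun p => .iInter fun q => .iInter fun _ =>
    (isOpen_setOf_not_subset_fixSet _).isGδ
end

section
/- Let [a,b] and [c,d] be nondegenerate compact intervals, let f be an increasing self-homeomorphism of [a,b] with f and f⁻¹ absolutely continuous whose only fixed points are a and b, and let g be an increasing self-homeomorphism of [c,d] with g and g⁻¹ absolutely continuous whose only fixed points are c and d. Suppose either f(x) > x for all x ∈ (a,b) and g(y) > y for all y ∈ (c,d), or f(x) < x for all x ∈ (a,b) and g(y) < y for all y ∈ (c,d). Then there exists an increasing bijection h : [a,b] → [c,d] such that both h and h⁻¹ are absolutely continuous and h ∘ f = g ∘ h. -/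
open MeasureTheory Set

/-! ### Toolbox for absolute continuity -/

section ACTools

variable {F G : ℝ → ℝ} {a b c d : ℝ}

lemma acon_degenerate (hba : b ≤ a) : ACOn F a b := by
  intro ε hε
  refine ⟨1, one_pos, fun n u v hb _ _ => ?_⟩
  have : ∀ i, |F (v i) - F (u i)| = 0 := by
    intro i
    obtain ⟨h1, h2, h3⟩ := hb i
    have : u i = v i := le_antisymm h2 (by linarith)
    simp [this]
  simp [this]
  positivity

lemma acon_of_le (hF : ACOn F a b) {a' b' : ℝ} (ha : a ≤ a') (hb : b' ≤ b) :
    ACOn F a' b' := by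
  intro ε hε
  obtain ⟨δ, hδ, H⟩ := hF ε hε
  exact ⟨δ, hδ, fun n u v hbd hd hs =>
    H n u v (fun i => ⟨ha.trans (hbd i).1, (hbd i).2.1, (hbd i).2.2.trans hb⟩) hd hs⟩

lemma acon_congr (hFG : ∀ x ∈ Icc a b, F x = G x) (hF : ACOn F a b) : ACOn G a b := by
  intro ε hε
  obtain ⟨δ, hδ, H⟩ := hF ε hε
  refine ⟨δ, hδ, fun n u v hbd hd hs => ?_⟩
  have key := H n u v hbd hd hs
  have : ∀ i : Fin n, |G (v i) - G (u i)| = |F (v i) - F (u i)| := by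
    intro i
    obtain ⟨h1, h2, h3⟩ := hbd i
    rw [hFG (u i) ⟨h1, h2.trans h3⟩, hFG (v i) ⟨h1.trans h2, h3⟩]
  rw [Finset.sum_congr rfl (fun i _ => this i)]
  exact key

lemma acon_comp (hG : ACOn G c d) (hF : ACOn F a b) (hm : MonotoneOn F (Icc a b))
    (hmaps : MapsTo F (Icc a b) (Icc c d)) : ACOn (fun x => G (F x)) a b := by
  intro ε hε
  obtain ⟨δ₁, hδ₁, H₁⟩ := hG ε hε
  obtain ⟨δ₂, hδ₂, H₂⟩ := hF δ₁ hδ₁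
  refine ⟨δ₂, hδ₂, fun n u v hbd hd hs => ?_⟩
  have hu : ∀ i, u i ∈ Icc a b := fun i => ⟨(hbd i).1, (hbd i).2.1.trans (hbd i).2.2⟩
  have hv : ∀ i, v i ∈ Icc a b := fun i => ⟨(hbd i).1.trans (hbd i).2.1, (hbd i).2.2⟩
  have key := H₁ n (fun i => F (u i)) (fun i => F (v i)) ?_ ?_ ?_
  · exact key
  · exact fun i => ⟨(hmaps (hu i)).1, hm (hu i) (hv i) (hbd i).2.1, (hmaps (hv i)).2⟩
  · intro i j hij
    rw [Set.disjoint_left]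
    intro x hxi hxj
    have hui : u i < v i := by
      by_contra hc
      have : u i = v i := le_antisymm (hbd i).2.1 (not_lt.mp hc)
      simp only [Set.mem_Ioo, this] at hxi
      exact absurd (hxi.1.trans hxi.2) (lt_irrefl _)
    have huj : u j < v j := by
      by_contra hc
      have : u j = v j := le_antisymm (hbd j).2.1 (not_lt.mp hc)
      simp only [Set.mem_Ioo, this] at hxj
      exact absurd (hxj.1.trans hxj.2) (lt_irrefl _)
    -- originals are ordered
    have hord : v i ≤ u j ∨ v j ≤ u i := by
      by_contra hc
      push_neg at hc
      obtain ⟨h1, h2⟩ := hc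
      have hz : max (u i) (u j) < min (v i) (v j) := by
        simp only [max_lt_iff, lt_min_iff]
        exact ⟨⟨hui, h1⟩, ⟨h2, huj⟩⟩
      set z := (max (u i) (u j) + min (v i) (v j)) / 2
      have hz1 : max (u i) (u j) < z := by simp only [z]; linarith
      have hz2 : z < min (v i) (v j) := by simp only [z]; linarith
      have hzi : z ∈ Ioo (u i) (v i) :=
        ⟨lt_of_le_of_lt (le_max_left _ _) hz1, lt_of_lt_of_le hz2 (min_le_left _ _)⟩
      have hzj : z ∈ Ioo (u j) (v j) :=
        ⟨lt_of_le_of_lt (le_max_right _ _) hz1, lt_of_lt_of_le hz2 (min_le_right _ _)⟩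
      exact Set.disjoint_left.mp (hd i j hij) hzi hzj
    simp only [Set.mem_Ioo] at hxi hxj
    rcases hord with hle | hle
    · have : F (v i) ≤ F (u j) := hm (hv i) (hu j) hle
      exact absurd (hxi.2.trans_le (this.trans hxj.1.le)) (lt_irrefl _)
    · have : F (v j) ≤ F (u i) := hm (hv j) (hu i) hle
      exact absurd (hxj.2.trans_le (this.trans hxi.1.le)) (lt_irrefl _)
  · have := H₂ n u v hbd hd hs
    calc (∑ i, (F (v i) - F (u i)))
        = ∑ i, |F (v i) - F (u i)| := by
          refine Finset.sum_congr rfl (fun i _ => ?_)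
          rw [abs_of_nonneg (sub_nonneg.mpr (hm (hu i) (hv i) (hbd i).2.1))]
      _ ≤ δ₁ := this

lemma acon_affine (p q r : ℝ) : ACOn (fun x => p + (x - r) * q) a b := by
  intro ε hε
  refine ⟨ε / (|q| + 1), by positivity, fun n u v hbd hd hs => ?_⟩
  have habs : ∀ i : Fin n, |(p + (v i - r) * q) - (p + (u i - r) * q)| = |q| * (v i - u i) := by
    intro i
    have : (p + (v i - r) * q) - (p + (u i - r) * q) = q * (v i - u i) := by ring
    rw [this, abs_mul, abs_of_nonneg (sub_nonneg.mpr (hbd i).2.1)]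
  rw [Finset.sum_congr rfl (fun i _ => habs i), ← Finset.mul_sum]
  have h1 : |q| * (∑ i, (v i - u i)) ≤ |q| * (ε / (|q| + 1)) :=
    mul_le_mul_of_nonneg_left hs (abs_nonneg q)
  have h2 : |q| * (ε / (|q| + 1)) ≤ ε := by
    rw [div_eq_inv_mul, ← mul_assoc]
    have hq1 : (0:ℝ) < |q| + 1 := by positivity
    have : |q| * (|q| + 1)⁻¹ ≤ 1 := by
      rw [mul_inv_le_iff₀ hq1]
      linarith [abs_nonneg q]
    nlinarith
  linarith

end ACTools
section ACTools2

variable {F : ℝ → ℝ} {a b : ℝ}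

/-- Packing: sum of increments of a monotone function over disjoint intervals
whose nondegenerate members lie below `γ`. -/
lemma packing_left {h : ℝ → ℝ} {α β : ℝ} (hm : MonotoneOn h (Icc α β))
    {n : ℕ} (u v : Fin n → ℝ)
    (hd : ∀ i j, i ≠ j → Disjoint (Ioo (u i) (v i)) (Ioo (u j) (v j))) :
    ∀ (s : Finset (Fin n)) (γ : ℝ), α ≤ γ → γ ≤ β →
    (∀ i ∈ s, α ≤ u i ∧ u i ≤ v i ∧ v i ≤ β ∧ (u i < v i → v i ≤ γ)) →
    (∑ i ∈ s, (h (v i) - h (u i))) ≤ h γ - h α := by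
  intro s
  induction s using Finset.strongInduction with
  | _ s ih =>
    intro γ hαγ hγβ hb
    by_cases hne : (s.filter (fun i => u i < v i)).Nonempty
    · obtain ⟨i₀, hi₀t, hmax⟩ := Finset.exists_max_image _ v hne
      rw [Finset.mem_filter] at hi₀t
      obtain ⟨hi₀s, hi₀lt⟩ := hi₀t
      obtain ⟨hb1, hb2, hb3, hb4⟩ := hb i₀ hi₀s
      have hvγ : v i₀ ≤ γ := hb4 hi₀lt
      have hss : s.erase i₀ ⊂ s := Finset.erase_ssubset hi₀s
      have key := ih (s.erase i₀) hss (u i₀) hb1 (hb2.trans hb3) ?_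
      · have hsplit : (∑ i ∈ s, (h (v i) - h (u i)))
            = (∑ i ∈ s.erase i₀, (h (v i) - h (u i))) + (h (v i₀) - h (u i₀)) :=
          (Finset.sum_erase_add s _ hi₀s).symm
        have hvle : h (v i₀) ≤ h γ := hm ⟨hb1.trans hb2, hb3⟩ ⟨hαγ, hγβ⟩ hvγ
        linarith
      · intro j hj
        rw [Finset.mem_erase] at hj
        obtain ⟨hji₀, hjs⟩ := hj
        obtain ⟨hc1, hc2, hc3, _⟩ := hb j hjs
        refine ⟨hc1, hc2, hc3, fun hjlt => ?_⟩
        have hjmax : v j ≤ v i₀ := hmax j (Finset.mem_filter.mpr ⟨hjs, hjlt⟩)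
        by_contra hcon
        push_neg at hcon
        -- u i₀ < v j ≤ v i₀ : intervals intersect
        set z := (max (u j) (u i₀) + v j) / 2 with hz
        have h1 : max (u j) (u i₀) < v j := by
          rw [max_lt_iff]; exact ⟨hjlt, hcon⟩
        have hz1 : max (u j) (u i₀) < z := by rw [hz]; linarith
        have hz2 : z < v j := by rw [hz]; linarith
        have hzj : z ∈ Ioo (u j) (v j) := ⟨lt_of_le_of_lt (le_max_left _ _) hz1, hz2⟩
        have hzi : z ∈ Ioo (u i₀) (v i₀) :=
          ⟨lt_of_le_of_lt (le_max_right _ _) hz1, lt_of_lt_of_le hz2 hjmax⟩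
        exact Set.disjoint_left.mp (hd j i₀ hji₀) hzj hzi
    · have : ∀ i ∈ s, h (v i) - h (u i) = 0 := by
        intro i hi
        obtain ⟨h1, h2, h3, _⟩ := hb i hi
        have : u i = v i := by
          by_contra hc
          exact hne ⟨i, Finset.mem_filter.mpr ⟨hi, lt_of_le_of_ne h2 hc⟩⟩
        rw [this]; ring
      rw [Finset.sum_congr rfl this]
      simp only [Finset.sum_const_zero]
      have := hm (Set.left_mem_Icc.mpr (hαγ.trans hγβ)) ⟨hαγ, hγβ⟩ hαγ
      linarith

/-- Mirror packing: nondegenerate members lie above `γ`. -/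
lemma packing_right {h : ℝ → ℝ} {α β : ℝ} (hm : MonotoneOn h (Icc α β))
    {n : ℕ} (u v : Fin n → ℝ)
    (hd : ∀ i j, i ≠ j → Disjoint (Ioo (u i) (v i)) (Ioo (u j) (v j))) :
    ∀ (s : Finset (Fin n)) (γ : ℝ), α ≤ γ → γ ≤ β →
    (∀ i ∈ s, α ≤ u i ∧ u i ≤ v i ∧ v i ≤ β ∧ (u i < v i → γ ≤ u i)) →
    (∑ i ∈ s, (h (v i) - h (u i))) ≤ h β - h γ := by
  intro s
  induction s using Finset.strongInduction with
  | _ s ih =>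
    intro γ hαγ hγβ hb
    by_cases hne : (s.filter (fun i => u i < v i)).Nonempty
    · obtain ⟨i₀, hi₀t, hmin⟩ := Finset.exists_min_image _ u hne
      rw [Finset.mem_filter] at hi₀t
      obtain ⟨hi₀s, hi₀lt⟩ := hi₀t
      obtain ⟨hb1, hb2, hb3, hb4⟩ := hb i₀ hi₀s
      have huγ : γ ≤ u i₀ := hb4 hi₀lt
      have hss : s.erase i₀ ⊂ s := Finset.erase_ssubset hi₀s
      have key := ih (s.erase i₀) hss (v i₀) (hb1.trans hb2) hb3 ?_
      · have hsplit : (∑ i ∈ s, (h (v i) - h (u i)))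
            = (∑ i ∈ s.erase i₀, (h (v i) - h (u i))) + (h (v i₀) - h (u i₀)) :=
          (Finset.sum_erase_add s _ hi₀s).symm
        have hule : h γ ≤ h (u i₀) := hm ⟨hαγ, hγβ⟩ ⟨hb1, hb2.trans hb3⟩ huγ
        linarith
      · intro j hj
        rw [Finset.mem_erase] at hj
        obtain ⟨hji₀, hjs⟩ := hj
        obtain ⟨hc1, hc2, hc3, _⟩ := hb j hjs
        refine ⟨hc1, hc2, hc3, fun hjlt => ?_⟩
        have hjmin : u i₀ ≤ u j := hmin j (Finset.mem_filter.mpr ⟨hjs, hjlt⟩)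
        by_contra hcon
        push_neg at hcon
        set z := (u j + min (v j) (v i₀)) / 2 with hz
        have h1 : u j < min (v j) (v i₀) := by
          rw [lt_min_iff]; exact ⟨hjlt, hcon⟩
        have hz1 : u j < z := by rw [hz]; linarith
        have hz2 : z < min (v j) (v i₀) := by rw [hz]; linarith
        have hzj : z ∈ Ioo (u j) (v j) := ⟨hz1, lt_of_lt_of_le hz2 (min_le_left _ _)⟩
        have hzi : z ∈ Ioo (u i₀) (v i₀) :=
          ⟨lt_of_le_of_lt hjmin hz1, lt_of_lt_of_le hz2 (min_le_right _ _)⟩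
        exact Set.disjoint_left.mp (hd j i₀ hji₀) hzj hzi
    · have : ∀ i ∈ s, h (v i) - h (u i) = 0 := by
        intro i hi
        obtain ⟨h1, h2, h3, _⟩ := hb i hi
        have : u i = v i := by
          by_contra hc
          exact hne ⟨i, Finset.mem_filter.mpr ⟨hi, lt_of_le_of_ne h2 hc⟩⟩
        rw [this]; ring
      rw [Finset.sum_congr rfl this]
      simp only [Finset.sum_const_zero]
      have := hm ⟨hαγ, hγβ⟩ (Set.right_mem_Icc.mpr (hαγ.trans hγβ)) hγβ
      linarith

/-- Splitting identity at a point `m`. -/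
lemma split_sub (h : ℝ → ℝ) {u v : ℝ} (m : ℝ) (huv : u ≤ v) :
    h v - h u = (h (min v m) - h (min u m)) + (h (max v m) - h (max u m)) := by
  rcases le_total v m with h1 | h1
  · rw [min_eq_left h1, min_eq_left (huv.trans h1), max_eq_right h1,
      max_eq_right (huv.trans h1)]
    ring
  · rcases le_total u m with h2 | h2
    · rw [min_eq_right h1, min_eq_left h2, max_eq_left h1, max_eq_right h2]
      ring
    · rw [min_eq_right h1, min_eq_right h2, max_eq_left h1, max_eq_left h2]
      ring

lemma Ioo_min_subset {u v m : ℝ} : Ioo (min u m) (min v m) ⊆ Ioo u v := by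
  intro x hx
  obtain ⟨hx1, hx2⟩ := hx
  rcases le_total u m with h | h
  · exact ⟨by rwa [min_eq_left h] at hx1, lt_of_lt_of_le hx2 (min_le_left _ _)⟩
  · exfalso
    rw [min_eq_right h] at hx1
    have : x < m := lt_of_lt_of_le hx2 (min_le_right _ _)
    linarith

lemma Ioo_max_subset {u v m : ℝ} : Ioo (max u m) (max v m) ⊆ Ioo u v := by
  intro x hx
  obtain ⟨hx1, hx2⟩ := hx
  rcases le_total v m with h | h
  · exfalso
    rw [max_eq_right h] at hx2
    have : m < x := lt_of_le_of_lt (le_max_right _ _) hx1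
    linarith
  · exact ⟨lt_of_le_of_lt (le_max_left _ _) hx1, by rwa [max_eq_left h] at hx2⟩

lemma min_clip {u v : ℝ} (m : ℝ) (huv : u ≤ v) :
    min u m ≤ min v m ∧ min v m - min u m ≤ v - u :=
  ⟨min_le_min huv le_rfl, by
    rcases le_total u m with h | h <;> rcases le_total v m with h' | h' <;>
      simp [min_eq_left, min_eq_right, h, h'] <;> linarith⟩

lemma max_clip {u v : ℝ} (m : ℝ) (huv : u ≤ v) :
    max u m ≤ max v m ∧ max v m - max u m ≤ v - u :=
  ⟨max_le_max huv le_rfl, by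
    rcases le_total u m with h | h <;> rcases le_total v m with h' | h' <;>
      simp [max_eq_left, max_eq_right, h, h'] <;> linarith⟩

/-- Concatenation of absolute continuity. -/
lemma acon_concat {m : ℝ} (ham : a ≤ m) (hmb : m ≤ b)
    (h1 : ACOn F a m) (h2 : ACOn F m b) : ACOn F a b := by
  intro ε hε
  obtain ⟨δ₁, hδ₁, H₁⟩ := h1 (ε/2) (by positivity)
  obtain ⟨δ₂, hδ₂, H₂⟩ := h2 (ε/2) (by positivity)
  refine ⟨min δ₁ δ₂, lt_min hδ₁ hδ₂, fun n u v hbd hd hs => ?_⟩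
  have key1 := H₁ n (fun i => min (u i) m) (fun i => min (v i) m) ?_ ?_ ?_
  rotate_left
  · intro i
    obtain ⟨h1', h2', h3'⟩ := hbd i
    exact ⟨le_min h1' ham, (min_clip m h2').1, min_le_right _ _⟩
  · intro i j hij
    exact (hd i j hij).mono Ioo_min_subset Ioo_min_subset
  · refine le_trans (le_trans (Finset.sum_le_sum ?_) hs) (min_le_left _ _)
    intro i _
    exact (min_clip m (hbd i).2.1).2
  have key2 := H₂ n (fun i => max (u i) m) (fun i => max (v i) m) ?_ ?_ ?_
  rotate_left
  · intro i
    obtain ⟨h1', h2', h3'⟩ := hbd i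
    exact ⟨le_max_right _ _, (max_clip m h2').1, max_le h3' hmb⟩
  · intro i j hij
    exact (hd i j hij).mono Ioo_max_subset Ioo_max_subset
  · refine le_trans (le_trans (Finset.sum_le_sum ?_) hs) (min_le_right _ _)
    intro i _
    exact (max_clip m (hbd i).2.1).2
  have tri : ∀ i : Fin n, |F (v i) - F (u i)| ≤
      |F (min (v i) m) - F (min (u i) m)| + |F (max (v i) m) - F (max (u i) m)| := by
    intro i
    rw [split_sub F m (hbd i).2.1]
    exact abs_add_le _ _
  calc (∑ i, |F (v i) - F (u i)|)
      ≤ ∑ i, (|F (min (v i) m) - F (min (u i) m)| + |F (max (v i) m) - F (max (u i) m)|) :=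
        Finset.sum_le_sum (fun i _ => tri i)
    _ = (∑ i, |F (min (v i) m) - F (min (u i) m)|)
        + (∑ i, |F (max (v i) m) - F (max (u i) m)|) := Finset.sum_add_distrib
    _ ≤ ε/2 + ε/2 := add_le_add key1 key2
    _ = ε := by ring

end ACTools2
section ACTools3

variable {F : ℝ → ℝ} {a b : ℝ}

/-- If `F` is monotone on `[a,b]` and for every `ε` there is a middle interval
on which `F` is AC with small variation on the two tails, then `F` is AC on `[a,b]`. -/
lemma acon_of_tails (hm : MonotoneOn F (Icc a b))
    (H : ∀ ε > (0:ℝ), ∃ L R, a ≤ L ∧ L ≤ R ∧ R ≤ b ∧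
      F L - F a ≤ ε ∧ F b - F R ≤ ε ∧ ACOn F L R) : ACOn F a b := by
  intro ε hε
  obtain ⟨L, R, haL, hLR, hRb, htl, htr, hmid⟩ := H (ε/3) (by positivity)
  obtain ⟨δ, hδ, Hmid⟩ := hmid (ε/3) (by positivity)
  refine ⟨δ, hδ, fun n u v hbd hd hs => ?_⟩
  have hu : ∀ i, u i ∈ Icc a b := fun i => ⟨(hbd i).1, (hbd i).2.1.trans (hbd i).2.2⟩
  have hv : ∀ i, v i ∈ Icc a b := fun i => ⟨(hbd i).1.trans (hbd i).2.1, (hbd i).2.2⟩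
  set u1 := fun i => min (u i) L with hu1
  set v1 := fun i => min (v i) L with hv1
  set u2 := fun i => min (max (u i) L) R with hu2
  set v2 := fun i => min (max (v i) L) R with hv2
  set u3 := fun i => max (max (u i) L) R with hu3
  set v3 := fun i => max (max (v i) L) R with hv3
  -- the three-fold split
  have hsplit : ∀ i : Fin n, F (v i) - F (u i)
      = (F (v1 i) - F (u1 i)) + ((F (v2 i) - F (u2 i)) + (F (v3 i) - F (u3 i))) := by
    intro i
    rw [split_sub F L (hbd i).2.1, split_sub F R (max_le_max (hbd i).2.1 le_rfl)]
  -- Sum 1 : left tail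
  have key1 : (∑ i, (F (v1 i) - F (u1 i))) ≤ F L - F a := by
    have := packing_left hm u1 v1
      (fun i j hij => (hd i j hij).mono Ioo_min_subset Ioo_min_subset)
      Finset.univ L haL (hLR.trans hRb) ?_
    · simpa using this
    · intro i _
      refine ⟨le_min (hbd i).1 haL, (min_clip L (hbd i).2.1).1,
        (min_le_right _ _).trans (hLR.trans hRb), fun _ => min_le_right _ _⟩
  -- Sum 3 : right tail
  have key3 : (∑ i, (F (v3 i) - F (u3 i))) ≤ F b - F R := by
    have := packing_right hm u3 v3
      (fun i j hij => (hd i j hij).mono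
        (Ioo_max_subset.trans Ioo_max_subset) (Ioo_max_subset.trans Ioo_max_subset))
      Finset.univ R (haL.trans hLR) hRb ?_
    · simpa using this
    · intro i _
      refine ⟨(haL.trans hLR).trans (le_max_right _ _),
        max_le_max (max_le_max (hbd i).2.1 le_rfl) le_rfl,
        max_le (max_le (hbd i).2.2 (hLR.trans hRb)) hRb, fun _ => le_max_right _ _⟩
  -- Sum 2 : middle
  have key2 : (∑ i, (F (v2 i) - F (u2 i))) ≤ ε/3 := by
    have h2 := Hmid n u2 v2 ?_ ?_ ?_
    · calc (∑ i, (F (v2 i) - F (u2 i))) = ∑ i, |F (v2 i) - F (u2 i)| := by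
            refine Finset.sum_congr rfl (fun i _ => ?_)
            rw [abs_of_nonneg]
            refine sub_nonneg.mpr (hm ?_ ?_ ((min_clip R (max_le_max (hbd i).2.1 le_rfl)).1))
            · exact ⟨le_trans haL (le_min (le_max_right _ _) hLR), min_le_right _ _ |>.trans hRb⟩
            · exact ⟨le_trans haL (le_min (le_max_right _ _) hLR), min_le_right _ _ |>.trans hRb⟩
        _ ≤ ε/3 := h2
    · intro i
      refine ⟨le_min (le_max_right _ _) hLR,
        (min_clip R (max_le_max (hbd i).2.1 le_rfl)).1, min_le_right _ _⟩
    · intro i j hij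
      exact (hd i j hij).mono (Ioo_min_subset.trans Ioo_max_subset)
        (Ioo_min_subset.trans Ioo_max_subset)
    · refine le_trans (Finset.sum_le_sum ?_) hs
      intro i _
      exact le_trans (min_clip R (max_le_max (hbd i).2.1 le_rfl)).2
        (max_clip L (hbd i).2.1).2
  -- Combine
  have habs : ∀ i : Fin n, |F (v i) - F (u i)| = F (v i) - F (u i) :=
    fun i => abs_of_nonneg (sub_nonneg.mpr (hm (hu i) (hv i) (hbd i).2.1))
  calc (∑ i, |F (v i) - F (u i)|) = ∑ i, (F (v i) - F (u i)) :=
        Finset.sum_congr rfl (fun i _ => habs i)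
    _ = (∑ i, (F (v1 i) - F (u1 i)))
        + ((∑ i, (F (v2 i) - F (u2 i))) + (∑ i, (F (v3 i) - F (u3 i)))) := by
        rw [← Finset.sum_add_distrib, ← Finset.sum_add_distrib]
        exact Finset.sum_congr rfl (fun i _ => hsplit i)
    _ ≤ ε/3 + (ε/3 + ε/3) := by
        refine add_le_add (key1.trans htl) (add_le_add key2 (key3.trans htr))
    _ = ε := by ring

end ACTools3
section Bump

/-- The data of a single-bump AC homeomorphism (no continuity needed). -/
def IsBump (a b : ℝ) (f : Equiv.Perm ℝ) : Prop :=
  (∀ x ∉ Icc a b, f x = x) ∧ StrictMonoOn ⇑f (Icc a b) ∧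
  MapsTo ⇑f (Icc a b) (Icc a b) ∧ ACOn ⇑f a b ∧ ACOn ⇑f.symm a b

variable {a b : ℝ} {f : Equiv.Perm ℝ}

lemma IsBump.symm_mem (hf : IsBump a b f) {x : ℝ} (hx : x ∈ Icc a b) :
    f.symm x ∈ Icc a b := by
  by_contra hc
  have h1 := hf.1 _ hc
  rw [Equiv.apply_symm_apply] at h1
  exact hc (h1 ▸ hx)

lemma IsBump.symm_maps (hf : IsBump a b f) : MapsTo ⇑f.symm (Icc a b) (Icc a b) :=
  fun _ hx => hf.symm_mem hx

lemma IsBump.symm_mono (hf : IsBump a b f) : StrictMonoOn ⇑f.symm (Icc a b) := by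
  intro x hx y hy hxy
  by_contra hc
  push_neg at hc
  have := hf.2.1.monotoneOn (hf.symm_mem hy) (hf.symm_mem hx) hc
  rw [Equiv.apply_symm_apply, Equiv.apply_symm_apply] at this
  exact absurd hxy (not_lt.mpr this)

lemma IsBump.symm_fix (hf : IsBump a b f) {x : ℝ} (hx : x ∉ Icc a b) :
    f.symm x = x := by
  conv_lhs => rw [← hf.1 x hx]
  exact Equiv.symm_apply_apply f x

lemma isBump_one : IsBump a b (1 : Equiv.Perm ℝ) := by
  refine ⟨fun x _ => rfl, fun x _ y _ h => by simpa using h, fun x hx => hx, ?_, ?_⟩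
  · exact acon_congr (F := fun x => 0 + (x - 0) * 1) (fun x _ => by simp) (acon_affine 0 1 0)
  · exact acon_congr (F := fun x => 0 + (x - 0) * 1) (fun x _ => by simp; rfl) (acon_affine 0 1 0)

lemma IsBump.mul {g : Equiv.Perm ℝ} (hf : IsBump a b f) (hg : IsBump a b g) :
    IsBump a b (f * g) := by
  refine ⟨?_, ?_, ?_, ?_, ?_⟩
  · intro x hx
    rw [Equiv.Perm.mul_apply, hg.1 x hx, hf.1 x hx]
  · intro x hx y hy hxy
    rw [Equiv.Perm.mul_apply, Equiv.Perm.mul_apply]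
    exact hf.2.1 (hg.2.2.1 hx) (hg.2.2.1 hy) (hg.2.1 hx hy hxy)
  · intro x hx
    rw [Equiv.Perm.mul_apply]
    exact hf.2.2.1 (hg.2.2.1 hx)
  · refine acon_congr (F := fun x => f (g x)) (fun x _ => rfl) ?_
    exact acon_comp hf.2.2.2.1 hg.2.2.2.1 hg.2.1.monotoneOn hg.2.2.1
  · refine acon_congr (F := fun x => g.symm (f.symm x)) (fun x _ => rfl) ?_
    exact acon_comp hg.2.2.2.2 hf.2.2.2.2 hf.symm_mono.monotoneOn hf.symm_maps

lemma IsBump.inv (hf : IsBump a b f) : IsBump a b f⁻¹ := by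
  have hcoe : ⇑(f⁻¹) = ⇑f.symm := rfl
  refine ⟨?_, ?_, ?_, ?_, ?_⟩
  · intro x hx; rw [hcoe.symm] at *; exact hf.symm_fix hx
  · rw [hcoe]; exact hf.symm_mono
  · rw [hcoe]; exact hf.symm_maps
  · rw [hcoe]; exact hf.2.2.2.2
  · have : (f⁻¹).symm = f := rfl
    rw [this]; exact hf.2.2.2.1

/-- The bumps form a subgroup. -/
def bumpSubgroup (a b : ℝ) : Subgroup (Equiv.Perm ℝ) where
  carrier := {f | IsBump a b f}
  one_mem' := isBump_one
  mul_mem' := fun hf hg => hf.mul hg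
  inv_mem' := fun hf => hf.inv

lemma IsBump.zpow (hf : IsBump a b f) (n : ℤ) : IsBump a b (f ^ n) :=
  Subgroup.zpow_mem (bumpSubgroup a b) (show f ∈ bumpSubgroup a b from hf) n

lemma IsBump.apply_left (hab : a ≤ b) (hf : IsBump a b f) : f a = a := by
  have hmem : a ∈ Icc a b := Set.left_mem_Icc.mpr hab
  have h1 : a ≤ f a := (hf.2.2.1 hmem).1
  have h2 : a ≤ f.symm a := (hf.symm_mem hmem).1
  have h3 := hf.2.1.monotoneOn hmem (hf.symm_mem hmem) h2
  rw [Equiv.apply_symm_apply] at h3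
  exact le_antisymm h3 h1

lemma IsBump.apply_right (hab : a ≤ b) (hf : IsBump a b f) : f b = b := by
  have hmem : b ∈ Icc a b := Set.right_mem_Icc.mpr hab
  have h1 : f b ≤ b := (hf.2.2.1 hmem).2
  have h2 : f.symm b ≤ b := (hf.symm_mem hmem).2
  have h3 := hf.2.1.monotoneOn (hf.symm_mem hmem) hmem h2
  rw [Equiv.apply_symm_apply] at h3
  exact le_antisymm h1 h3

lemma zpow_fix {x : ℝ} (hfx : f x = x) : ∀ n : ℤ, (f ^ n) x = x := by
  have hsymm : f.symm x = x := by
    have h := congrArg f.symm hfx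
    rw [Equiv.symm_apply_apply] at h
    exact h.symm
  intro n
  induction n using Int.induction_on with
  | zero => simp
  | succ k ih => rw [zpow_add_one, Equiv.Perm.mul_apply, hfx, ih]
  | pred k ih =>
    rw [zpow_sub_one, Equiv.Perm.mul_apply]
    have : f⁻¹ x = x := hsymm
    rw [this, ih]

end Bump

lemma zpow_apply_zpow (f : Equiv.Perm ℝ) (m n : ℤ) (x : ℝ) :
    (f ^ m) ((f ^ n) x) = (f ^ (m + n)) x := by
  rw [← Equiv.Perm.mul_apply, ← zpow_add]
section Orbit

variable {a b : ℝ} {f : Equiv.Perm ℝ}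

lemma mid_mem (hab : a < b) : (a + b) / 2 ∈ Ioo a b := ⟨by linarith, by linarith⟩

lemma orbit_mem (hab : a < b) (hf : IsBump a b f) (n : ℤ) :
    (f ^ n) ((a + b) / 2) ∈ Ioo a b := by
  have hx₀ := mid_mem hab
  have hB := hf.zpow n
  have hIcc : (f ^ n) ((a + b) / 2) ∈ Icc a b := hB.2.2.1 (Ioo_subset_Icc_self hx₀)
  refine ⟨lt_of_le_of_ne hIcc.1 ?_, lt_of_le_of_ne hIcc.2 ?_⟩
  · intro hc
    have ha : (f ^ n) a = a := zpow_fix (hf.apply_left hab.le) n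
    have := (f ^ n).injective (hc.symm.trans ha.symm)
    exact absurd this (ne_of_gt hx₀.1)
  · intro hc
    have hb' : (f ^ n) b = b := zpow_fix (hf.apply_right hab.le) n
    have := (f ^ n).injective (hc.trans hb'.symm)
    exact absurd this (ne_of_lt hx₀.2)

lemma orbit_succ (n : ℤ) (x : ℝ) : (f ^ (n + 1)) x = f ((f ^ n) x) := by
  rw [add_comm, zpow_add, zpow_one, Equiv.Perm.mul_apply]

lemma orbit_strictMono (hab : a < b) (hf : IsBump a b f)
    (hpush : ∀ x ∈ Ioo a b, x < f x) :
    StrictMono (fun n : ℤ => (f ^ n) ((a + b) / 2)) := by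
  apply strictMono_int_of_lt_succ
  intro n
  rw [orbit_succ]
  exact hpush _ (orbit_mem hab hf n)

lemma orbit_exists_gt (hab : a < b) (hf : IsBump a b f)
    (hpush : ∀ x ∈ Ioo a b, x < f x) {z : ℝ} (hz : z ∈ Ioo a b) :
    ∃ n : ℤ, z < (f ^ n) ((a + b) / 2) := by
  by_contra hc
  push_neg at hc
  set X : ℤ → ℝ := fun n => (f ^ n) ((a + b) / 2) with hX
  have hc' : ∀ n : ℤ, X n ≤ z := fun n => hc n
  set ℓ := ⨆ k : ℕ, X k with hℓ
  have bdd : BddAbove (Set.range fun k : ℕ => X k) := by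
    refine ⟨z, ?_⟩
    rintro _ ⟨k, rfl⟩
    exact hc' k
  have hℓz : ℓ ≤ z := ciSup_le fun k => hc' k
  have hX0 : X 0 = (a + b) / 2 := by simp [hX]
  have hx0ℓ : (a + b) / 2 ≤ ℓ := hX0 ▸ le_ciSup bdd 0
  have hℓIoo : ℓ ∈ Ioo a b := ⟨lt_of_lt_of_le (mid_mem hab).1 hx0ℓ, lt_of_le_of_lt hℓz hz.2⟩
  have hkey : ∀ k : ℕ, X k ≤ f.symm ℓ := by
    intro k
    have hsucc : X (k + 1) = f (X k) := orbit_succ k _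
    have h1 : f.symm (X (↑k + 1)) = X k := by rw [hsucc, Equiv.symm_apply_apply]
    rw [← h1]
    have hup : X (↑k + 1) ≤ ℓ := by
      have := le_ciSup bdd (k + 1)
      rwa [show ((↑(k+1):ℤ)) = (↑k + 1 : ℤ) by push_cast; ring] at this
    refine hf.symm_mono.monotoneOn ?_ ?_ hup
    · exact Ioo_subset_Icc_self (orbit_mem hab hf _)
    · exact Ioo_subset_Icc_self hℓIoo
  have hℓ' : ℓ ≤ f.symm ℓ := ciSup_le hkey
  have hfℓ : f ℓ ≤ ℓ := by
    have := hf.2.1.monotoneOn (Ioo_subset_Icc_self hℓIoo)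
      (hf.symm_mem (Ioo_subset_Icc_self hℓIoo)) hℓ'
    rwa [Equiv.apply_symm_apply] at this
  exact absurd (hpush ℓ hℓIoo) (not_lt.mpr hfℓ)

lemma orbit_exists_lt (hab : a < b) (hf : IsBump a b f)
    (hpush : ∀ x ∈ Ioo a b, x < f x) {z : ℝ} (hz : z ∈ Ioo a b) :
    ∃ n : ℤ, (f ^ n) ((a + b) / 2) < z := by
  by_contra hc
  push_neg at hc
  set X : ℤ → ℝ := fun n => (f ^ n) ((a + b) / 2) with hX
  have hc' : ∀ n : ℤ, z ≤ X n := fun n => hc n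
  set ℓ := ⨅ k : ℕ, X (-k) with hℓ
  have bdd : BddBelow (Set.range fun k : ℕ => X (-k)) := by
    refine ⟨z, ?_⟩
    rintro _ ⟨k, rfl⟩
    exact hc' _
  have hzℓ : z ≤ ℓ := le_ciInf fun k => hc' _
  have hX0 : X (-(0:ℕ)) = (a + b) / 2 := by simp [hX]
  have hℓx0 : ℓ ≤ (a + b) / 2 := hX0 ▸ ciInf_le bdd 0
  have hℓIoo : ℓ ∈ Ioo a b := ⟨lt_of_lt_of_le hz.1 hzℓ, lt_of_le_of_lt hℓx0 (mid_mem hab).2⟩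
  have hkey : ∀ k : ℕ, f ℓ ≤ X (-k) := by
    intro k
    have hsucc : X (-(k:ℤ) - 1 + 1) = f (X (-(k:ℤ) - 1)) := orbit_succ _ _
    have h2 : ℓ ≤ X (-(k:ℤ) - 1) := by
      have : ((- (k+1) : ℤ)) = -(k:ℤ) - 1 := by ring
      calc ℓ ≤ X (-(↑(k+1):ℤ)) := ciInf_le bdd (k+1)
        _ = X (-(k:ℤ) - 1) := by rw [show (-(↑(k+1):ℤ)) = -(k:ℤ) - 1 by push_cast; ring]
    have h3 : f ℓ ≤ f (X (-(k:ℤ) - 1)) := by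
      refine hf.2.1.monotoneOn (Ioo_subset_Icc_self hℓIoo)
        (Ioo_subset_Icc_self (orbit_mem hab hf _)) h2
    calc f ℓ ≤ f (X (-(k:ℤ) - 1)) := h3
      _ = X (-(k:ℤ)) := by rw [← hsucc]; norm_num
  have hfℓ : f ℓ ≤ ℓ := le_ciInf hkey
  exact absurd (hpush ℓ hℓIoo) (not_lt.mpr hfℓ)

open Classical in
lemma orbit_cover (hab : a < b) (hf : IsBump a b f)
    (hpush : ∀ x ∈ Ioo a b, x < f x) {z : ℝ} (hz : z ∈ Ioo a b) :
    ∃ n : ℤ, (f ^ n) ((a + b) / 2) ≤ z ∧ z < (f ^ (n + 1)) ((a + b) / 2) := by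
  obtain ⟨n₀, hn₀⟩ := orbit_exists_lt hab hf hpush hz
  obtain ⟨m, hm⟩ := orbit_exists_gt hab hf hpush hz
  have hX := orbit_strictMono hab hf hpush
  have hbdd : ∃ lo : ℤ, ∀ k : ℤ, z < (f ^ k) ((a + b) / 2) → lo ≤ k := by
    refine ⟨n₀, fun k hk => ?_⟩
    have hlt : (f ^ n₀) ((a + b) / 2) < (f ^ k) ((a + b) / 2) := hn₀.trans hk
    have := hX.lt_iff_lt.mp hlt
    omega
  obtain ⟨lb, hlb, hleast⟩ := Int.exists_least_of_bdd
    (P := fun n => z < (f ^ n) ((a + b) / 2)) hbdd ⟨m, hm⟩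
  refine ⟨lb - 1, ?_, by rwa [sub_add_cancel]⟩
  by_contra hcon
  push_neg at hcon
  have := hleast _ hcon
  omega

lemma orbit_cover_unique (hab : a < b) (hf : IsBump a b f)
    (hpush : ∀ x ∈ Ioo a b, x < f x) {z : ℝ} {m n : ℤ}
    (h1 : (f ^ m) ((a + b) / 2) ≤ z) (h2 : z < (f ^ (m + 1)) ((a + b) / 2))
    (h3 : (f ^ n) ((a + b) / 2) ≤ z) (h4 : z < (f ^ (n + 1)) ((a + b) / 2)) :
    m = n := by
  have hX := orbit_strictMono hab hf hpush
  by_contra hc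
  rcases lt_or_gt_of_ne hc with hlt | hlt
  · have : m + 1 ≤ n := by omega
    have := hX.monotone this
    linarith
  · have : n + 1 ≤ m := by omega
    have := hX.monotone this
    linarith

end Orbit
section Core

/-- Core construction: the conjugating map built from a base bijection `A`
between the fundamental domains. -/
theorem core_conj (a b c d : ℝ) (hab : a < b) (hcd : c < d)
    (f g : Equiv.Perm ℝ) (hf : IsBump a b f) (hg : IsBump c d g)
    (hfp : ∀ x ∈ Ioo a b, x < f x) (hgp : ∀ y ∈ Ioo c d, y < g y)
    (A : ℝ → ℝ)
    (hA0 : A ((a+b)/2) = (c+d)/2)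
    (hA1 : A (f ((a+b)/2)) = g ((c+d)/2))
    (hAmono : StrictMonoOn A (Icc ((a+b)/2) (f ((a+b)/2))))
    (hAac : ACOn A ((a+b)/2) (f ((a+b)/2))) :
    ∃ h : ℝ → ℝ,
      (∀ x, x ≤ a → h x = c) ∧
      (∀ x, b ≤ x → h x = d) ∧
      StrictMonoOn h (Icc a b) ∧
      MapsTo h (Icc a b) (Icc c d) ∧
      ACOn h a b ∧
      (∀ x ∈ Icc a b, h (f x) = g (h x)) ∧
      (∀ n : ℤ, ∀ x, (f ^ n) ((a+b)/2) ≤ x → x < (f ^ (n+1)) ((a+b)/2) →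
        h x = (g ^ n) (A ((f ^ (-n)) x)) ∧
        (g ^ n) ((c+d)/2) ≤ h x ∧ h x < (g ^ (n+1)) ((c+d)/2)) := by
  classical
  set x₀ : ℝ := (a+b)/2 with hx₀def
  set y₀ : ℝ := (c+d)/2 with hy₀def
  set X : ℤ → ℝ := fun n => (f ^ n) x₀ with hXdef
  set Y : ℤ → ℝ := fun n => (g ^ n) y₀ with hYdef
  have hx₀ : x₀ ∈ Ioo a b := mid_mem hab
  have hy₀ : y₀ ∈ Ioo c d := mid_mem hcd
  have hXmem : ∀ n, X n ∈ Ioo a b := fun n => orbit_mem hab hf n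
  have hYmem : ∀ n, Y n ∈ Ioo c d := fun n => orbit_mem hcd hg n
  have hXmono : StrictMono X := orbit_strictMono hab hf hfp
  have hYmono : StrictMono Y := orbit_strictMono hcd hg hgp
  have hXsub : ∀ n, Icc (X n) (X (n+1)) ⊆ Icc a b := fun n =>
    Icc_subset_Icc (hXmem n).1.le (hXmem (n+1)).2.le
  have hX1 : X 1 = f x₀ := by rw [hXdef]; simp
  have hY1 : Y 1 = g y₀ := by rw [hYdef]; simp
  have hx01 : x₀ < X 1 := by rw [hX1]; exact hfp x₀ hx₀
  have hy01 : y₀ < Y 1 := by rw [hY1]; exact hgp y₀ hy₀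
  have hX0 : X 0 = x₀ := by rw [hXdef]; simp
  have hY0 : Y 0 = y₀ := by rw [hYdef]; simp
  -- endpoints of the fundamental pieces under f^(-n)
  have hfXn : ∀ n : ℤ, (f ^ (-n)) (X n) = x₀ := by
    intro n; rw [hXdef]; simp only []
    rw [zpow_apply_zpow]; simp
  have hfXn1 : ∀ n : ℤ, (f ^ (-n)) (X (n+1)) = f x₀ := by
    intro n; rw [hXdef]; simp only []
    rw [zpow_apply_zpow, show -n + (n+1) = 1 by ring, zpow_one]
  have hmapsPiece : ∀ n : ℤ, MapsTo ⇑(f ^ (-n)) (Icc (X n) (X (n+1))) (Icc x₀ (f x₀)) := by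
    intro n x hx
    have hmono := (hf.zpow (-n)).2.1.monotoneOn
    constructor
    · rw [← hfXn n]
      exact hmono (hXsub n ⟨le_rfl, (hXmono (lt_add_one n)).le⟩) (hXsub n hx) hx.1
    · rw [← hfXn1 n]
      exact hmono (hXsub n hx) (hXsub n ⟨(hXmono (lt_add_one n)).le, le_rfl⟩) hx.2
  have hAmaps : MapsTo A (Icc x₀ (f x₀)) (Icc y₀ (Y 1)) := by
    intro t ht
    constructor
    · rw [← hA0]; exact hAmono.monotoneOn ⟨le_rfl, hx01.trans_eq hX1.symm |>.le⟩ ht ht.1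
    · rw [hY1, ← hA1]
      exact hAmono.monotoneOn ht ⟨(hx01.trans_eq hX1.symm).le, le_rfl⟩ ht.2
  have hYsubcd : Icc y₀ (Y 1) ⊆ Icc c d := Icc_subset_Icc hy₀.1.le (hYmem 1).2.le
  -- the piece maps
  set Hp : ℤ → ℝ → ℝ := fun n x => (g ^ n) (A ((f ^ (-n)) x)) with hHp
  have hHpXn : ∀ n, Hp n (X n) = Y n := by
    intro n; rw [hHp]; simp only []
    rw [hfXn n, hA0]
  have hHpXn1 : ∀ n, Hp n (X (n+1)) = Y (n+1) := by
    intro n; rw [hHp]; simp only []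
    rw [hfXn1 n, hA1, hYdef]
    simp only []
    have hg1 : g y₀ = (g ^ (1:ℤ)) y₀ := by rw [zpow_one]
    rw [hg1, zpow_apply_zpow, add_comm]
  have hHpMono : ∀ n, StrictMonoOn (Hp n) (Icc (X n) (X (n+1))) := by
    intro n x hx y hy hxy
    have h1 : (f ^ (-n)) x < (f ^ (-n)) y :=
      (hf.zpow (-n)).2.1 (hXsub n hx) (hXsub n hy) hxy
    have h2 : A ((f ^ (-n)) x) < A ((f ^ (-n)) y) :=
      hAmono (hmapsPiece n hx) (hmapsPiece n hy) h1
    exact (hg.zpow n).2.1 (hYsubcd (hAmaps (hmapsPiece n hx)))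
      (hYsubcd (hAmaps (hmapsPiece n hy))) h2
  -- covering of the interior by the orbit pieces
  have hcov : ∀ x, x ∈ Ioo a b → ∃ n : ℤ, X n ≤ x ∧ x < X (n+1) := by
    intro x hx
    exact orbit_cover hab hf hfp hx
  -- define the conjugacy
  set h : ℝ → ℝ := fun x =>
    if hx : x ∈ Ioo a b then Hp (hcov x hx).choose x else if x ≤ a then c else d
    with hhdef
  have hform : ∀ n : ℤ, ∀ x, X n ≤ x → x < X (n+1) → h x = Hp n x := by
    intro n x h1 h2
    have hxIoo : x ∈ Ioo a b := ⟨(hXmem n).1.trans_le h1, h2.trans (hXmem (n+1)).2⟩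
    have hcu : (hcov x hxIoo).choose = n := by
      obtain ⟨hm1, hm2⟩ := (hcov x hxIoo).choose_spec
      exact orbit_cover_unique hab hf hfp hm1 hm2 h1 h2
    rw [hhdef]
    simp only [dif_pos hxIoo]
    rw [hcu]
  have hha : ∀ x, x ≤ a → h x = c := by
    intro x hx
    have : x ∉ Ioo a b := fun hc => absurd hx (not_le.mpr hc.1)
    rw [hhdef]; simp only [dif_neg this, if_pos hx]
  have hhb : ∀ x, b ≤ x → h x = d := by
    intro x hx
    have h1 : x ∉ Ioo a b := fun hc => absurd hx (not_le.mpr hc.2)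
    have h2 : ¬ x ≤ a := not_le.mpr (hab.trans_le hx)
    rw [hhdef]; simp only [dif_neg h1, if_neg h2]
  have hhX : ∀ n, h (X n) = Y n := by
    intro n
    rw [hform n (X n) le_rfl (hXmono (lt_add_one n)), hHpXn]
  have hpiece : ∀ n : ℤ, ∀ x, X n ≤ x → x < X (n+1) → Y n ≤ h x ∧ h x < Y (n+1) := by
    intro n x h1 h2
    rw [hform n x h1 h2]
    constructor
    · rw [← hHpXn n]
      exact (hHpMono n).monotoneOn ⟨le_rfl, (hXmono (lt_add_one n)).le⟩ ⟨h1, h2.le⟩ h1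
    · rw [← hHpXn1 n]
      exact hHpMono n ⟨h1, h2.le⟩ ⟨(hXmono (lt_add_one n)).le, le_rfl⟩ h2
  -- strict monotonicity
  have hmono : StrictMonoOn h (Icc a b) := by
    intro x hx y hy hxy
    rcases eq_or_lt_of_le hx.1 with hxa | hxa
    · -- x = a
      rw [hha x hxa.symm.le]
      rcases eq_or_lt_of_le hy.2 with hyb | hyb
      · rw [hhb y hyb.ge]; exact hcd
      · obtain ⟨n, hn1, hn2⟩ := hcov y ⟨hxa ▸ hxy, hyb⟩
        exact lt_of_lt_of_le (hYmem n).1 (hpiece n y hn1 hn2).1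
    · have hxIoo : x ∈ Ioo a b := ⟨hxa, lt_of_lt_of_le hxy hy.2⟩
      obtain ⟨n, hn1, hn2⟩ := hcov x hxIoo
      rcases eq_or_lt_of_le hy.2 with hyb | hyb
      · rw [hhb y hyb.ge]
        exact lt_of_lt_of_le (hpiece n x hn1 hn2).2 (hYmem (n+1)).2.le
      · obtain ⟨m, hm1, hm2⟩ := hcov y ⟨hx.1.trans_lt hxy, hyb⟩
        have hnm : n ≤ m := by
          by_contra hc
          push_neg at hc
          have : X (m+1) ≤ X n := hXmono.monotone (by omega)
          linarith
        rcases eq_or_lt_of_le hnm with heq | hlt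
        · subst heq
          rw [hform n x hn1 hn2, hform n y hm1 hm2]
          exact hHpMono n ⟨hn1, hn2.le⟩ ⟨hm1, hm2.le⟩ hxy
        · have h1 : h x < Y (n+1) := (hpiece n x hn1 hn2).2
          have h2 : Y (n+1) ≤ Y m := hYmono.monotone (by omega)
          have h3 : Y m ≤ h y := (hpiece m y hm1 hm2).1
          linarith
  -- maps to
  have hmaps : MapsTo h (Icc a b) (Icc c d) := by
    intro x hx
    rcases eq_or_lt_of_le hx.1 with hxa | hxa
    · rw [hha x hxa.symm.le]; exact ⟨le_rfl, hcd.le⟩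
    rcases eq_or_lt_of_le hx.2 with hxb | hxb
    · rw [hhb x hxb.ge]; exact ⟨hcd.le, le_rfl⟩
    obtain ⟨n, hn1, hn2⟩ := hcov x ⟨hxa, hxb⟩
    obtain ⟨k1, k2⟩ := hpiece n x hn1 hn2
    exact ⟨(hYmem n).1.le.trans k1, k2.le.trans (hYmem (n+1)).2.le⟩
  -- semiconjugacy
  have hconj : ∀ x ∈ Icc a b, h (f x) = g (h x) := by
    intro x hx
    rcases eq_or_lt_of_le hx.1 with hxa | hxa
    · rw [← hxa, hf.apply_left hab.le, hha a le_rfl, hg.apply_left hcd.le]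
    rcases eq_or_lt_of_le hx.2 with hxb | hxb
    · rw [hxb, hf.apply_right hab.le, hhb b le_rfl, hg.apply_right hcd.le]
    obtain ⟨n, hn1, hn2⟩ := hcov x ⟨hxa, hxb⟩
    have hfx1 : X (n+1) ≤ f x := by
      have : f (X n) ≤ f x := hf.2.1.monotoneOn (hXsub n ⟨le_rfl, (hXmono (lt_add_one n)).le⟩)
        (Ioo_subset_Icc_self ⟨hxa, hxb⟩) hn1
      rwa [← orbit_succ] at this
    have hfx2 : f x < X (n+1+1) := by
      have : f x < f (X (n+1)) := hf.2.1 (Ioo_subset_Icc_self ⟨hxa, hxb⟩)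
        (Ioo_subset_Icc_self (hXmem (n+1))) hn2
      rwa [← orbit_succ] at this
    rw [hform (n+1) (f x) hfx1 hfx2, hform n x hn1 hn2, hHp]
    simp only []
    have key : (f ^ (-(n+1))) (f x) = (f ^ (-n)) x := by
      have : f x = (f ^ (1:ℤ)) x := by rw [zpow_one]
      rw [this, zpow_apply_zpow, show -(n+1) + 1 = -n by ring]
    rw [key, orbit_succ n]
  -- absolute continuity
  have hpieceAC : ∀ n : ℤ, ACOn h (X n) (X (n+1)) := by
    intro n
    refine acon_congr (F := Hp n) ?_ ?_
    · intro x hx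
      rcases eq_or_lt_of_le hx.2 with hxe | hxl
      · rw [hxe, hHpXn1 n, hhX (n+1)]
      · exact (hform n x hx.1 hxl).symm
    · have hinner : ACOn (fun x => A ((f ^ (-n)) x)) (X n) (X (n+1)) := by
        refine acon_comp (c := x₀) (d := f x₀) hAac ?_ ?_ (hmapsPiece n)
        · exact acon_of_le (hf.zpow (-n)).2.2.2.1 (hXmem n).1.le (hXmem (n+1)).2.le
        · exact ((hf.zpow (-n)).2.1.monotoneOn).mono (hXsub n)
      have houter : ACOn ⇑(g ^ n) y₀ (Y 1) :=
        acon_of_le (hg.zpow n).2.2.2.1 hy₀.1.le (hYmem 1).2.le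
      have := acon_comp houter hinner ?_ ?_
      · exact acon_congr (fun x _ => rfl) this
      · intro x hx y hy hxy
        exact hAmono.monotoneOn (hmapsPiece n hx) (hmapsPiece n hy)
          ((hf.zpow (-n)).2.1.monotoneOn (hXsub n hx) (hXsub n hy) hxy)
      · exact fun x hx => hAmaps (hmapsPiece n hx)
  have hcat : ∀ (k : ℕ) (n : ℤ), ACOn h (X n) (X (n + k)) := by
    intro k
    induction k with
    | zero => intro n; exact acon_degenerate (by simp)
    | succ k ih =>
      intro n
      have hcast : (n + (k+1 : ℕ) : ℤ) = (n + k) + 1 := by push_cast; ring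
      rw [hcast]
      exact acon_concat (hXmono.monotone (by omega)) (hXmono.monotone (by omega))
        (ih n) (hpieceAC (n + k))
  have hac : ACOn h a b := by
    refine acon_of_tails hmono.monotoneOn ?_
    intro ε hε
    have hz₁ : min y₀ (c + ε) ∈ Ioo c d :=
      ⟨lt_min hy₀.1 (by linarith), lt_of_le_of_lt (min_le_left _ _) hy₀.2⟩
    have hz₂ : max y₀ (d - ε) ∈ Ioo c d :=
      ⟨lt_of_lt_of_le hy₀.1 (le_max_left _ _), max_lt hy₀.2 (by linarith)⟩
    obtain ⟨n₁, hn₁⟩ := orbit_exists_lt hcd hg hgp hz₁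
    obtain ⟨n₂, hn₂⟩ := orbit_exists_gt hcd hg hgp hz₂
    set m₁ := min n₁ n₂ with hm₁
    set m₂ := max n₁ n₂ with hm₂
    refine ⟨X m₁, X m₂, (hXmem m₁).1.le, hXmono.monotone (min_le_max), (hXmem m₂).2.le,
      ?_, ?_, ?_⟩
    · rw [hhX m₁, hha a le_rfl]
      have : Y m₁ ≤ Y n₁ := hYmono.monotone (min_le_left _ _)
      have : Y n₁ < min y₀ (c + ε) := hn₁
      have := min_le_right y₀ (c + ε)
      linarith [hYmono.monotone (min_le_left n₁ n₂)]
    · rw [hhX m₂, hhb b le_rfl]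
      have h1 : Y n₂ ≤ Y m₂ := hYmono.monotone (le_max_right _ _)
      have h2 : max y₀ (d - ε) < Y n₂ := hn₂
      have h3 := le_max_right y₀ (d - ε)
      linarith
    · have := hcat (m₂ - m₁).toNat m₁
      rwa [show (m₁ + ((m₂ - m₁).toNat : ℤ)) = m₂ by
        rw [Int.toNat_of_nonneg (by omega : (0:ℤ) ≤ m₂ - m₁)]; ring] at this
  -- wrap up
  refine ⟨h, hha, hhb, hmono, hmaps, hac, hconj, ?_⟩
  intro n x h1 h2
  exact ⟨hform n x h1 h2, (hpiece n x h1 h2).1, (hpiece n x h1 h2).2⟩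

end Core
section Main

theorem main_inc (a b c d : ℝ) (hab : a < b) (hcd : c < d)
    (f g : Equiv.Perm ℝ) (hf : IsBump a b f) (hg : IsBump c d g)
    (hfp : ∀ x ∈ Ioo a b, x < f x) (hgp : ∀ y ∈ Ioo c d, y < g y) :
    ∃ h k : ℝ → ℝ,
      StrictMonoOn h (Icc a b) ∧
      MapsTo h (Icc a b) (Icc c d) ∧
      SurjOn h (Icc a b) (Icc c d) ∧
      (∀ x ∈ Icc a b, k (h x) = x) ∧
      (∀ y ∈ Icc c d, h (k y) = y) ∧
      ACOn h a b ∧ ACOn k c d ∧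
      ∀ x ∈ Icc a b, h (f x) = g (h x) := by
  classical
  set x₀ : ℝ := (a+b)/2 with hx₀def
  set y₀ : ℝ := (c+d)/2 with hy₀def
  set x₁ : ℝ := f x₀ with hx₁def
  set y₁ : ℝ := g y₀ with hy₁def
  have hx₀I : x₀ ∈ Ioo a b := mid_mem hab
  have hy₀I : y₀ ∈ Ioo c d := mid_mem hcd
  have hx01 : x₀ < x₁ := hfp x₀ hx₀I
  have hy01 : y₀ < y₁ := hgp y₀ hy₀I
  have hxne : x₁ - x₀ ≠ 0 := by linarith
  have hyne : y₁ - y₀ ≠ 0 := by linarith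
  set q : ℝ := (y₁ - y₀) / (x₁ - x₀) with hqdef
  set q' : ℝ := (x₁ - x₀) / (y₁ - y₀) with hq'def
  have hqpos : 0 < q := div_pos (by linarith) (by linarith)
  have hq'pos : 0 < q' := div_pos (by linarith) (by linarith)
  set A : ℝ → ℝ := fun t => y₀ + (t - x₀) * q with hAdef
  set A' : ℝ → ℝ := fun s => x₀ + (s - y₀) * q' with hA'def
  have hA0 : A x₀ = y₀ := by rw [hAdef]; simp
  have hA1 : A x₁ = y₁ := by rw [hAdef]; simp only []; rw [hqdef]; field_simp; ring
  have hA'0 : A' y₀ = x₀ := by rw [hA'def]; simp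
  have hA'1 : A' y₁ = x₁ := by rw [hA'def]; simp only []; rw [hq'def]; field_simp; ring
  have hA'A : ∀ t, A' (A t) = t := by
    intro t
    rw [hAdef, hA'def]
    simp only []
    rw [hqdef, hq'def]
    field_simp
    ring
  have hAA' : ∀ s, A (A' s) = s := by
    intro s
    rw [hAdef, hA'def]
    simp only []
    rw [hqdef, hq'def]
    field_simp
    ring
  have hAmono : StrictMonoOn A (Icc x₀ x₁) := by
    intro s _ t _ hst
    rw [hAdef]
    simp only []
    nlinarith
  have hA'mono : StrictMonoOn A' (Icc y₀ y₁) := by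
    intro s _ t _ hst
    rw [hA'def]
    simp only []
    nlinarith
  have hAac : ACOn A x₀ x₁ := acon_affine y₀ q x₀
  have hA'ac : ACOn A' y₀ y₁ := acon_affine x₀ q' y₀
  obtain ⟨h, hha, hhb, hhmono, hhmaps, hhac, hhconj, hhfor⟩ :=
    core_conj a b c d hab hcd f g hf hg hfp hgp A hA0 hA1 hAmono hAac
  obtain ⟨k, hka, hkb, hkmono, hkmaps, hkac, hkconj, hkfor⟩ :=
    core_conj c d a b hcd hab g f hg hf hgp hfp A' hA'0 hA'1 hA'mono hA'ac
  have hkh : ∀ x ∈ Icc a b, k (h x) = x := by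
    intro x hx
    rcases eq_or_lt_of_le hx.1 with hxa | hxa
    · rw [← hxa, hha a le_rfl, hka c le_rfl]
    rcases eq_or_lt_of_le hx.2 with hxb | hxb
    · rw [hxb, hhb b le_rfl, hkb d le_rfl]
    obtain ⟨n, hn1, hn2⟩ := orbit_cover hab hf hfp ⟨hxa, hxb⟩
    obtain ⟨hfx, hlow, hhigh⟩ := hhfor n x hn1 hn2
    obtain ⟨hkx, _, _⟩ := hkfor n (h x) hlow hhigh
    rw [hkx, hfx]
    rw [zpow_apply_zpow]
    simp only [neg_add_cancel, zpow_zero, Equiv.Perm.coe_one, id_eq]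
    rw [hA'A, zpow_apply_zpow]
    simp
  have hhk : ∀ y ∈ Icc c d, h (k y) = y := by
    intro y hy
    rcases eq_or_lt_of_le hy.1 with hyc | hyc
    · rw [← hyc, hka c le_rfl, hha a le_rfl]
    rcases eq_or_lt_of_le hy.2 with hyd | hyd
    · rw [hyd, hkb d le_rfl, hhb b le_rfl]
    obtain ⟨n, hn1, hn2⟩ := orbit_cover hcd hg hgp ⟨hyc, hyd⟩
    obtain ⟨hky, hlow, hhigh⟩ := hkfor n y hn1 hn2
    obtain ⟨hhy, _, _⟩ := hhfor n (k y) hlow hhigh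
    rw [hhy, hky]
    rw [zpow_apply_zpow]
    simp only [neg_add_cancel, zpow_zero, Equiv.Perm.coe_one, id_eq]
    rw [hAA', zpow_apply_zpow]
    simp
  refine ⟨h, k, hhmono, hhmaps, ?_, hkh, hhk, hhac, hkac, hhconj⟩
  intro y hy
  exact ⟨k y, hkmaps hy, hhk y hy⟩

end Main
lemma isBump_of_Hac {a b : ℝ} {f : Equiv.Perm ℝ} (hf : f ∈ Hac a b) : IsBump a b f := by
  obtain ⟨⟨h1, h2, h3, _⟩, h5, h6⟩ := hf
  exact ⟨h1, h2, h3, h5, h6⟩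

/-- Two single-bump absolutely continuous homeomorphisms of the
same parity are conjugate by a bi-absolutely-continuous increasing bijection. -/
theorem bumps_conjugate
    (a b c d : ℝ) (hab : a < b) (hcd : c < d)
    (f g : Equiv.Perm ℝ) (hf : f ∈ Hac a b) (hg : g ∈ Hac c d)
    (hf' : ∀ x ∈ Ioo a b, f x ≠ x) (hg' : ∀ y ∈ Ioo c d, g y ≠ y)
    (hpar : ((∀ x ∈ Ioo a b, x < f x) ∧ (∀ y ∈ Ioo c d, y < g y)) ∨
            ((∀ x ∈ Ioo a b, f x < x) ∧ (∀ y ∈ Ioo c d, g y < y))) :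
    ∃ h k : ℝ → ℝ,
      StrictMonoOn h (Icc a b) ∧
      MapsTo h (Icc a b) (Icc c d) ∧
      SurjOn h (Icc a b) (Icc c d) ∧
      (∀ x ∈ Icc a b, k (h x) = x) ∧
      (∀ y ∈ Icc c d, h (k y) = y) ∧
      ACOn h a b ∧ ACOn k c d ∧
      ∀ x ∈ Icc a b, h (f x) = g (h x) := by
  have hfB : IsBump a b f := isBump_of_Hac hf
  have hgB : IsBump c d g := isBump_of_Hac hg
  rcases hpar with ⟨hfp, hgp⟩ | ⟨hfp, hgp⟩
  · exact main_inc a b c d hab hcd f g hfB hgB hfp hgp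
  · -- decreasing case: conjugate the inverses
    have hfB' : IsBump a b f⁻¹ := hfB.inv
    have hgB' : IsBump c d g⁻¹ := hgB.inv
    have hfp' : ∀ x ∈ Ioo a b, x < f⁻¹ x := by
      intro x hx
      by_contra hc
      push_neg at hc
      have hmem : x ∈ Icc a b := Ioo_subset_Icc_self hx
      have h1 : f.symm x ∈ Icc a b := hfB.symm_mem hmem
      have h2 : f (f.symm x) ≤ f x := hfB.2.1.monotoneOn h1 hmem hc
      rw [Equiv.apply_symm_apply] at h2
      exact absurd (hfp x hx) (not_lt.mpr h2)
    have hgp' : ∀ y ∈ Ioo c d, y < g⁻¹ y := by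
      intro y hy
      by_contra hc
      push_neg at hc
      have hmem : y ∈ Icc c d := Ioo_subset_Icc_self hy
      have h1 : g.symm y ∈ Icc c d := hgB.symm_mem hmem
      have h2 : g (g.symm y) ≤ g y := hgB.2.1.monotoneOn h1 hmem hc
      rw [Equiv.apply_symm_apply] at h2
      exact absurd (hgp y hy) (not_lt.mpr h2)
    obtain ⟨h, k, hmono, hmaps, hsurj, hkh, hhk, hhac, hkac, hconj⟩ :=
      main_inc a b c d hab hcd f⁻¹ g⁻¹ hfB' hgB' hfp' hgp'
    refine ⟨h, k, hmono, hmaps, hsurj, hkh, hhk, hhac, hkac, ?_⟩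
    intro x hx
    have hfx : f x ∈ Icc a b := hfB.2.2.1 hx
    have := hconj (f x) hfx
    rw [show f⁻¹ (f x) = x from Equiv.symm_apply_apply f x] at this
    rw [this]; exact (Equiv.apply_symm_apply g _).symm
end
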